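/- arXiv:1805.09020 — 9 statements merged into one kernel-verified Lean document; each statement's English description precedes it below -/
import Mathlib

section
/- An invertible matrix x ∈ GL_N(k) satisfies ᵀx·J·x = J if and only if x is the block diagonal matrix [[1, 0],[0, y]] (blocks of sizes 1 and 2n, in the basis ordering (e₀, e₁,…,eₙ, f₁,…,fₙ)) for some y ∈ Sp_{2n}(k). Consequently the fixed point group G^θ = {x ∈ GL_N(k) : θ(x) = x} is isomorphic to Sp_{2n}(k) via y ↦ [[1,0],[0,y]]. -/
open Matrix

/-- The Gram matrix `J' = [[0, 1ₙ], [1ₙ, 0]]` of the symplectic form on `k^{2n}`. -/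
def Jsp (k : Type*) [Field k] (n : ℕ) : Matrix (Fin n ⊕ Fin n) (Fin n ⊕ Fin n) k :=
  Matrix.fromBlocks 0 1 1 0

/-- The `N × N` matrix `J = [[1,0,0],[0,0,1ₙ],[0,1ₙ,0]]`, `N = 2n+1`, rows/columns indexed by
the ordered basis `(e₀, e₁,…,eₙ, f₁,…,fₙ)`, encoded as `Unit ⊕ (Fin n ⊕ Fin n)`. -/
def JN (k : Type*) [Field k] (n : ℕ) :
    Matrix (Unit ⊕ (Fin n ⊕ Fin n)) (Unit ⊕ (Fin n ⊕ Fin n)) k :=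
  Matrix.fromBlocks 1 0 0 (Jsp k n)

/-!
In characteristic 2 the symplectic form `J'` is alternating, so the diagonal of `Mᵀ J' M`
vanishes for every `M`. Hence for `x = [[a, b], [c, d]]` the diagonal of the lower right block of
`xᵀ J x = J` reduces to `b_j² = 0`, so `b = 0`. Then `dᵀ J' d = J'` makes `d` invertible, the
off-diagonal block `cᵀ J' d = 0` forces `c = 0`, and `a² = 1` forces `a = 1`. Finally
`θ(x) = x` is a rewriting of `xᵀ J x = J`.
-/

section

variable {k : Type*} [Field k] {n : ℕ}

lemma Jsp_mul_Jsp : Jsp k n * Jsp k n = 1 := by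
  simp [Jsp, fromBlocks_multiply, ← fromBlocks_one]

lemma isUnit_Jsp : IsUnit (Jsp k n) :=
  (isUnit_iff_isUnit_det _).mpr (isUnit_det_of_left_inverse Jsp_mul_Jsp)

lemma isUnit_JN : IsUnit (JN k n) :=
  isUnit_fromBlocks_zero₂₁.mpr ⟨isUnit_one, isUnit_Jsp⟩

lemma transpose_mul_Jsp_mul_apply_self [CharP k 2] {m : Type*} [Fintype m]
    (M : Matrix (Fin n ⊕ Fin n) m k) (j : m) : (Mᵀ * Jsp k n * M) j j = 0 := by
  have hJM : ∀ a, (Jsp k n * M) a j = M a.swap j := by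
    rintro (i | i) <;> simp [Jsp, mul_apply, one_apply]
  rw [Matrix.mul_assoc, mul_apply, Fintype.sum_sum_type]
  simp only [transpose_apply, hJM, Sum.swap_inl, Sum.swap_inr]
  rw [Finset.sum_congr rfl fun i _ => mul_comm (M (Sum.inr i) j) _]
  exact CharTwo.add_self_eq_zero _

lemma fromBlocks_transpose_mul_JN_mul (A : Matrix Unit Unit k)
    (B : Matrix Unit (Fin n ⊕ Fin n) k) (C : Matrix (Fin n ⊕ Fin n) Unit k)
    (D : Matrix (Fin n ⊕ Fin n) (Fin n ⊕ Fin n) k) :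
    (fromBlocks A B C D)ᵀ * JN k n * fromBlocks A B C D =
      fromBlocks (Aᵀ * A + Cᵀ * Jsp k n * C) (Aᵀ * B + Cᵀ * Jsp k n * D)
        (Bᵀ * A + Dᵀ * Jsp k n * C) (Bᵀ * B + Dᵀ * Jsp k n * D) := by
  simp [JN, fromBlocks_transpose, fromBlocks_multiply, Matrix.mul_assoc]

lemma eq_zero_of_transpose_mul_self_add_transpose_mul_Jsp_mul_eq [CharP k 2] {m : Type*} [Fintype m]
    {B : Matrix Unit m k} {D : Matrix (Fin n ⊕ Fin n) m k} {J : Matrix m m k}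
    (hJ : ∀ j, J j j = 0) (h : Bᵀ * B + Dᵀ * Jsp k n * D = J) : B = 0 := by
  ext u j
  have hjj := congrFun (congrFun h j) j
  rw [Matrix.add_apply, transpose_mul_Jsp_mul_apply_self, add_zero, hJ, mul_apply] at hjj
  simpa [Subsingleton.elim u ()] using hjj

lemma eq_one_of_transpose_mul_self_eq_one [CharP k 2] {A : Matrix Unit Unit k}
    (h : Aᵀ * A = 1) : A = 1 := by
  have hA : A () () * A () () = 1 := by simpa [mul_apply] using congrFun (congrFun h ()) ()
  ext u v
  rw [Subsingleton.elim u (), Subsingleton.elim v (), one_apply_eq]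
  rcases mul_self_eq_one_iff.mp hA with h1 | h1
  · exact h1
  · rw [h1, CharTwo.neg_eq]

end

lemma isUnit_of_transpose_mul_mul_eq {k m : Type*} [Field k] [Fintype m] [DecidableEq m]
    {J D : Matrix m m k} (hJ : IsUnit J) (h : Dᵀ * J * D = J) : IsUnit D := by
  rw [isUnit_iff_isUnit_det] at hJ ⊢
  rw [← h, det_mul, det_mul, det_transpose] at hJ
  exact isUnit_of_mul_isUnit_right hJ

lemma inv_mul_transpose_inv_mul_eq_iff {k m : Type*} [CommRing k] [Fintype m] [DecidableEq m]
    {J x : Matrix m m k} (hJ : IsUnit J) (hx : IsUnit x) :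
    J⁻¹ * (xᵀ)⁻¹ * J = x ↔ xᵀ * J * x = J := by
  let := hJ.invertible
  let := hx.invertible
  rw [Matrix.mul_assoc, inv_mul_eq_iff_eq_mul_of_invertible, inv_mul_eq_iff_eq_mul_of_invertible,
    ← Matrix.mul_assoc, eq_comm]

section

variable {k : Type*} [Field k] [CharP k 2] {n : ℕ}

lemma exists_eq_fromBlocks_of_transpose_mul_JN_mul
    {x : Matrix (Unit ⊕ (Fin n ⊕ Fin n)) (Unit ⊕ (Fin n ⊕ Fin n)) k}
    (h : xᵀ * JN k n * x = JN k n) :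
    ∃ y : Matrix (Fin n ⊕ Fin n) (Fin n ⊕ Fin n) k,
      IsUnit y ∧ yᵀ * Jsp k n * y = Jsp k n ∧
        x = fromBlocks (1 : Matrix Unit Unit k) 0 0 y := by
  rw [← fromBlocks_toBlocks x, fromBlocks_transpose_mul_JN_mul, JN, fromBlocks_inj] at h
  rw [← fromBlocks_toBlocks x]
  obtain ⟨h₁₁, h₁₂, -, h₂₂⟩ := h
  have hB : x.toBlocks₁₂ = 0 := by
    refine eq_zero_of_transpose_mul_self_add_transpose_mul_Jsp_mul_eq (fun j => ?_) h₂₂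
    cases j <;> simp [Jsp]
  simp only [hB, transpose_zero, Matrix.mul_zero, zero_add] at h₁₂ h₂₂
  have hD : IsUnit x.toBlocks₂₂ := isUnit_of_transpose_mul_mul_eq isUnit_Jsp h₂₂
  have hC : x.toBlocks₂₁ = 0 := by
    let := (isUnit_Jsp.mul hD).invertible
    rw [Matrix.mul_assoc, ← Matrix.zero_mul (Jsp k n * x.toBlocks₂₂),
      Matrix.mul_left_inj_of_invertible, transpose_eq_zero] at h₁₂
    exact h₁₂
  simp only [hC, transpose_zero, Matrix.zero_mul, add_zero] at h₁₁
  exact ⟨_, hD, h₂₂, by rw [eq_one_of_transpose_mul_self_eq_one h₁₁, hB, hC]⟩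

lemma transpose_mul_JN_mul_eq_iff
    (x : Matrix (Unit ⊕ (Fin n ⊕ Fin n)) (Unit ⊕ (Fin n ⊕ Fin n)) k) :
    xᵀ * JN k n * x = JN k n ↔
      ∃ y : Matrix (Fin n ⊕ Fin n) (Fin n ⊕ Fin n) k,
        IsUnit y ∧ yᵀ * Jsp k n * y = Jsp k n ∧
        x = fromBlocks (1 : Matrix Unit Unit k) 0 0 y := by
  refine ⟨exists_eq_fromBlocks_of_transpose_mul_JN_mul, ?_⟩
  rintro ⟨y, -, hy, rfl⟩
  rw [fromBlocks_transpose_mul_JN_mul]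
  simp [hy, JN]

lemma inv_JN_mul_transpose_inv_mul_JN_eq_iff
    {x : Matrix (Unit ⊕ (Fin n ⊕ Fin n)) (Unit ⊕ (Fin n ⊕ Fin n)) k} (hx : IsUnit x) :
    (JN k n)⁻¹ * (xᵀ)⁻¹ * JN k n = x ↔
      ∃ y : Matrix (Fin n ⊕ Fin n) (Fin n ⊕ Fin n) k,
        IsUnit y ∧ yᵀ * Jsp k n * y = Jsp k n ∧
          x = fromBlocks (1 : Matrix Unit Unit k) 0 0 y :=
  (inv_mul_transpose_inv_mul_eq_iff isUnit_JN hx).trans (transpose_mul_JN_mul_eq_iff x)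

end

theorem stmt_3_general (k : Type) [Field k] [CharP k 2] (n : ℕ) :
    (∀ x : Matrix (Unit ⊕ (Fin n ⊕ Fin n)) (Unit ⊕ (Fin n ⊕ Fin n)) k, IsUnit x →
      (xᵀ * JN k n * x = JN k n ↔
        ∃ y : Matrix (Fin n ⊕ Fin n) (Fin n ⊕ Fin n) k,
          IsUnit y ∧ yᵀ * Jsp k n * y = Jsp k n ∧
          x = Matrix.fromBlocks (1 : Matrix Unit Unit k) 0 0 y)) ∧
    Set.BijOn (fun y : Matrix (Fin n ⊕ Fin n) (Fin n ⊕ Fin n) k =>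
        Matrix.fromBlocks (1 : Matrix Unit Unit k) 0 0 y)
      {y : Matrix (Fin n ⊕ Fin n) (Fin n ⊕ Fin n) k |
        IsUnit y ∧ yᵀ * Jsp k n * y = Jsp k n}
      {x : Matrix (Unit ⊕ (Fin n ⊕ Fin n)) (Unit ⊕ (Fin n ⊕ Fin n)) k |
        IsUnit x ∧ (JN k n)⁻¹ * (xᵀ)⁻¹ * JN k n = x} ∧
    ∀ y₁ y₂ : Matrix (Fin n ⊕ Fin n) (Fin n ⊕ Fin n) k,
      Matrix.fromBlocks (1 : Matrix Unit Unit k) 0 0 (y₁ * y₂) =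
        Matrix.fromBlocks (1 : Matrix Unit Unit k) 0 0 y₁ *
          Matrix.fromBlocks (1 : Matrix Unit Unit k) 0 0 y₂ := by
  refine ⟨fun x _ => transpose_mul_JN_mul_eq_iff x, ⟨?_, ?_, ?_⟩, ?_⟩
  · rintro y ⟨hy, hsp⟩
    have hu : IsUnit (fromBlocks (1 : Matrix Unit Unit k) 0 0 y) :=
      isUnit_fromBlocks_zero₂₁.mpr ⟨isUnit_one, hy⟩
    exact ⟨hu, (inv_JN_mul_transpose_inv_mul_JN_eq_iff hu).mpr ⟨y, hy, hsp, rfl⟩⟩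
  · intro y₁ _ y₂ _ h
    exact (fromBlocks_inj.mp h).2.2.2
  · rintro x ⟨hx, hfix⟩
    obtain ⟨y, hy, hsp, rfl⟩ := (inv_JN_mul_transpose_inv_mul_JN_eq_iff hx).mp hfix
    exact ⟨y, ⟨hy, hsp⟩, rfl⟩
  · intro y₁ y₂
    simp [fromBlocks_multiply]

/-- In characteristic 2 and odd size `N = 2n+1`, an invertible `x` satisfies
`xᵀ J x = J` iff `x = [[1,0],[0,y]]` for some `y ∈ Sp_{2n}(k)`; consequently the fixed point
group `G^θ = {x : θ(x) = x}` is isomorphic to `Sp_{2n}(k)` via `y ↦ [[1,0],[0,y]]`. -/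
theorem stmt_3 (k : Type) [Field k] [IsAlgClosed k] [CharP k 2] (n : ℕ) (hn : 1 ≤ n) :
    (∀ x : Matrix (Unit ⊕ (Fin n ⊕ Fin n)) (Unit ⊕ (Fin n ⊕ Fin n)) k, IsUnit x →
      (xᵀ * JN k n * x = JN k n ↔
        ∃ y : Matrix (Fin n ⊕ Fin n) (Fin n ⊕ Fin n) k,
          IsUnit y ∧ yᵀ * Jsp k n * y = Jsp k n ∧
          x = Matrix.fromBlocks (1 : Matrix Unit Unit k) 0 0 y)) ∧
    Set.BijOn (fun y : Matrix (Fin n ⊕ Fin n) (Fin n ⊕ Fin n) k =>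
        Matrix.fromBlocks (1 : Matrix Unit Unit k) 0 0 y)
      {y : Matrix (Fin n ⊕ Fin n) (Fin n ⊕ Fin n) k |
        IsUnit y ∧ yᵀ * Jsp k n * y = Jsp k n}
      {x : Matrix (Unit ⊕ (Fin n ⊕ Fin n)) (Unit ⊕ (Fin n ⊕ Fin n)) k |
        IsUnit x ∧ (JN k n)⁻¹ * (xᵀ)⁻¹ * JN k n = x} ∧
    ∀ y₁ y₂ : Matrix (Fin n ⊕ Fin n) (Fin n ⊕ Fin n) k,
      Matrix.fromBlocks (1 : Matrix Unit Unit k) 0 0 (y₁ * y₂) =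
        Matrix.fromBlocks (1 : Matrix Unit Unit k) 0 0 y₁ *
          Matrix.fromBlocks (1 : Matrix Unit Unit k) 0 0 y₂ :=
  stmt_3_general k n
end

section
/- The space 𝔤^θ = {x ∈ M_N(k) : ᵀ(J·x) = J·x} is closed under the commutator bracket and has dimension (n+1)(2n+1) over k. The subset {x ∈ 𝔤^θ : the e₀-row and the e₀-column of x are zero} equals {[[0,0],[0,y]] : y ∈ 𝔰𝔭_{2n}(k)} where 𝔰𝔭_{2n}(k) = {y ∈ M_{2n}(k) : ᵀy·J' = J'·y}; it is a Lie subalgebra of 𝔤^θ of dimension 2n²+n, and is properly contained in 𝔤^θ. In particular the Lie algebra of G^θ is strictly smaller than 𝔤^θ. -/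
open Matrix

/-- The space `𝔤^θ = {x ∈ M_N(k) : (J x)ᵀ = J x}` as a `k`-subspace of `M_N(k)`. -/
def gTheta (k : Type*) [Field k] (n : ℕ) :
    Submodule k (Matrix (Unit ⊕ (Fin n ⊕ Fin n)) (Unit ⊕ (Fin n ⊕ Fin n)) k) where
  carrier := {x | (JN k n * x)ᵀ = JN k n * x}
  add_mem' := by
    intro a b ha hb
    simp only [Set.mem_setOf_eq] at ha hb ⊢
    rw [Matrix.mul_add, Matrix.transpose_add, ha, hb]
  zero_mem' := by
    simp only [Set.mem_setOf_eq, Matrix.mul_zero, Matrix.transpose_zero]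
  smul_mem' := by
    intro c a ha
    simp only [Set.mem_setOf_eq] at ha ⊢
    rw [Matrix.mul_smul, Matrix.transpose_smul, ha]

/-- The subspace of `𝔤^θ` of matrices whose `e₀`-row and `e₀`-column vanish
(the Lie algebra of `G^θ`). -/
def lieGTheta (k : Type*) [Field k] (n : ℕ) :
    Submodule k (Matrix (Unit ⊕ (Fin n ⊕ Fin n)) (Unit ⊕ (Fin n ⊕ Fin n)) k) where
  carrier := {x | (JN k n * x)ᵀ = JN k n * x ∧ (∀ j, x (Sum.inl ()) j = 0) ∧
    ∀ i, x i (Sum.inl ()) = 0}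
  add_mem' := by
    rintro a b ⟨ha1, ha2, ha3⟩ ⟨hb1, hb2, hb3⟩
    refine ⟨?_, fun j => ?_, fun i => ?_⟩
    · rw [Matrix.mul_add, Matrix.transpose_add, ha1, hb1]
    · simp [Matrix.add_apply, ha2 j, hb2 j]
    · simp [Matrix.add_apply, ha3 i, hb3 i]
  zero_mem' := by
    refine ⟨?_, fun j => rfl, fun i => rfl⟩
    simp only [Matrix.mul_zero, Matrix.transpose_zero]
  smul_mem' := by
    rintro c a ⟨ha1, ha2, ha3⟩
    refine ⟨?_, fun j => ?_, fun i => ?_⟩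
    · rw [Matrix.mul_smul, Matrix.transpose_smul, ha1]
    · simp [Matrix.smul_apply, ha2 j]
    · simp [Matrix.smul_apply, ha3 i]


variable {k : Type} [Field k] {ι : Type} [Fintype ι] [DecidableEq ι]

def symmSub (k : Type) [Field k] (ι : Type) [Fintype ι] [DecidableEq ι] :
    Submodule k (Matrix ι ι k) where
  carrier := {x | xᵀ = x}
  add_mem' := by intro a b ha hb; simp_all [Matrix.transpose_add]
  zero_mem' := by simp
  smul_mem' := by intro c a ha; simp_all [Matrix.transpose_smul]

noncomputable def symmEquiv (k : Type) [Field k] (ι : Type) [Fintype ι] [DecidableEq ι] :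
    symmSub k ι ≃ₗ[k] (Sym2 ι → k) where
  toFun x := Sym2.lift ⟨fun i j => x.1 i j, fun i j => by
    have := congrFun (congrFun x.2 i) j
    simpa [Matrix.transpose_apply] using this.symm⟩
  map_add' x y := by
    funext s
    induction s using Sym2.ind with
    | _ i j => simp
  map_smul' c x := by
    funext s
    induction s using Sym2.ind with
    | _ i j => simp
  invFun f := ⟨Matrix.of fun i j => f s(i, j), by
    ext i j
    simp [Matrix.transpose_apply, Sym2.eq_swap]⟩
  left_inv x := by
    ext i j
    simp
  right_inv f := by
    funext s
    induction s using Sym2.ind with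
    | _ i j => simp

theorem finrank_symmSub :
    Module.finrank k (symmSub k ι) = Fintype.card ι * (Fintype.card ι + 1) / 2 := by
  rw [(symmEquiv k ι).finrank_eq, Module.finrank_pi, Sym2.card]
  rw [Nat.choose_two_right]
  congr 1
  rw [Nat.add_sub_cancel, Nat.mul_comm]

theorem finrank_Jsub (J : Matrix ι ι k) (hJ : J * J = 1)
    (S : Submodule k (Matrix ι ι k)) (hS : ∀ x, x ∈ S ↔ (J * x)ᵀ = J * x) :
    Module.finrank k S = Fintype.card ι * (Fintype.card ι + 1) / 2 := by
  let e : Matrix ι ι k ≃ₗ[k] Matrix ι ι k :=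
    LinearEquiv.ofLinear (LinearMap.mulLeft k J) (LinearMap.mulLeft k J)
      (LinearMap.ext fun x => by simp [← Matrix.mul_assoc, hJ])
      (LinearMap.ext fun x => by simp [← Matrix.mul_assoc, hJ])
  have hcomap : S = (symmSub k ι).comap e.toLinearMap := by
    ext x
    rw [hS, Submodule.mem_comap]
    rfl
  rw [hcomap, Submodule.comap_equiv_eq_map_symm, LinearEquiv.finrank_map_eq, finrank_symmSub]

omit [DecidableEq ι] in
theorem bracket_symm {J x y : Matrix ι ι k} [CharP k 2] (hJ : Jᵀ = J)
    (hx : (J * x)ᵀ = J * x) (hy : (J * y)ᵀ = J * y) :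
    (J * (x * y - y * x))ᵀ = J * (x * y - y * x) := by
  have hneg : ∀ M : Matrix ι ι k, -M = M := fun M => by
    ext i j; simpa using CharTwo.neg_eq (M i j)
  have hx' : xᵀ * J = J * x := by rw [← hx, Matrix.transpose_mul, hJ]
  have hy' : yᵀ * J = J * y := by rw [← hy, Matrix.transpose_mul, hJ]
  have h1 : (J * (x * y))ᵀ = J * (y * x) := by
    rw [← Matrix.mul_assoc, Matrix.transpose_mul, hx, ← Matrix.mul_assoc, hy', Matrix.mul_assoc]
  have h2 : (J * (y * x))ᵀ = J * (x * y) := by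
    rw [← Matrix.mul_assoc, Matrix.transpose_mul, hy, ← Matrix.mul_assoc, hx', Matrix.mul_assoc]
  calc (J * (x * y - y * x))ᵀ = J * (y * x) - J * (x * y) := by
        rw [Matrix.mul_sub, Matrix.transpose_sub, h1, h2]
    _ = -(J * (x * y) - J * (y * x)) := by rw [neg_sub]
    _ = J * (x * y - y * x) := by rw [hneg, Matrix.mul_sub]

theorem Jsp_transpose (k : Type) [Field k] (n : ℕ) : (Jsp k n)ᵀ = Jsp k n := by
  simp [Jsp, Matrix.fromBlocks_transpose]

theorem JN_transpose (k : Type) [Field k] (n : ℕ) : (JN k n)ᵀ = JN k n := by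
  simp [JN, Matrix.fromBlocks_transpose, Jsp_transpose]

theorem Jsp_sq (k : Type) [Field k] (n : ℕ) : Jsp k n * Jsp k n = 1 := by
  simp [Jsp, Matrix.fromBlocks_multiply, ← Matrix.fromBlocks_one]

theorem JN_sq (k : Type) [Field k] (n : ℕ) : JN k n * JN k n = 1 := by
  simp [JN, Matrix.fromBlocks_multiply, Jsp_sq, ← Matrix.fromBlocks_one]

theorem JN_mul_block (k : Type) [Field k] (n : ℕ)
    (y : Matrix (Fin n ⊕ Fin n) (Fin n ⊕ Fin n) k) :
    JN k n * Matrix.fromBlocks 0 0 0 y = Matrix.fromBlocks 0 0 0 (Jsp k n * y) := by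
  simp [JN, Matrix.fromBlocks_multiply]

theorem mem_lie_iff {k : Type} [Field k] {n : ℕ}
    (x : Matrix (Unit ⊕ (Fin n ⊕ Fin n)) (Unit ⊕ (Fin n ⊕ Fin n)) k) :
    x ∈ lieGTheta k n ↔ ∃ y, (Jsp k n * y)ᵀ = Jsp k n * y ∧
      x = Matrix.fromBlocks 0 0 0 y := by
  constructor
  · rintro ⟨h1, h2, h3⟩
    have hx : x = Matrix.fromBlocks 0 0 0 x.toBlocks₂₂ := by
      ext i j
      rcases i with i | i <;> rcases j with j | j
      · cases i; simpa using h2 (Sum.inl j)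
      · cases i; simpa using h2 (Sum.inr j)
      · cases j; simpa using h3 (Sum.inr i)
      · simp [Matrix.toBlocks₂₂]
    refine ⟨x.toBlocks₂₂, ?_, hx⟩
    rw [hx, JN_mul_block, Matrix.fromBlocks_transpose] at h1
    have := congrArg Matrix.toBlocks₂₂ h1
    simpa using this
  · rintro ⟨y, hy, rfl⟩
    refine ⟨?_, fun j => ?_, fun i => ?_⟩
    · rw [JN_mul_block, Matrix.fromBlocks_transpose]
      simp [hy]
    · rcases j with j | j <;> simp
    · rcases i with i | i <;> simp


def spSub (k : Type) [Field k] (n : ℕ) :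
    Submodule k (Matrix (Fin n ⊕ Fin n) (Fin n ⊕ Fin n) k) where
  carrier := {y | (Jsp k n * y)ᵀ = Jsp k n * y}
  add_mem' := by
    intro a b ha hb
    simp only [Set.mem_setOf_eq] at ha hb ⊢
    rw [Matrix.mul_add, Matrix.transpose_add, ha, hb]
  zero_mem' := by simp
  smul_mem' := by
    intro c a ha
    simp only [Set.mem_setOf_eq] at ha ⊢
    rw [Matrix.mul_smul, Matrix.transpose_smul, ha]

def blockEmbed (k : Type) [Field k] (n : ℕ) :
    Matrix (Fin n ⊕ Fin n) (Fin n ⊕ Fin n) k →ₗ[k]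
      Matrix (Unit ⊕ (Fin n ⊕ Fin n)) (Unit ⊕ (Fin n ⊕ Fin n)) k where
  toFun y := Matrix.fromBlocks 0 0 0 y
  map_add' a b := by simp [Matrix.fromBlocks_add]
  map_smul' c a := by simp [Matrix.fromBlocks_smul]

theorem blockEmbed_inj (k : Type) [Field k] (n : ℕ) :
    Function.Injective (blockEmbed k n) := fun a b h => by
  have := congrArg Matrix.toBlocks₂₂ h
  simpa [blockEmbed] using this

theorem lie_eq_map (k : Type) [Field k] (n : ℕ) :
    lieGTheta k n = (spSub k n).map (blockEmbed k n) := by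
  ext x
  rw [mem_lie_iff, Submodule.mem_map]
  exact ⟨fun ⟨y, h, hx⟩ => ⟨y, h, hx.symm⟩, fun ⟨y, h, hx⟩ => ⟨y, h, hx.symm⟩⟩

/-- `𝔤^θ` is closed under the commutator bracket and has dimension
`(n+1)(2n+1)`; the subset of `𝔤^θ` with vanishing `e₀`-row and `e₀`-column equals
`{[[0,0],[0,y]] : y ∈ 𝔰𝔭_{2n}(k)}`, is a Lie subalgebra of dimension `2n² + n`, and is
properly contained in `𝔤^θ`; in particular `Lie(G^θ)` is strictly smaller than `𝔤^θ`. -/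
theorem stmt_4 (k : Type) [Field k] [IsAlgClosed k] [CharP k 2] (n : ℕ) (hn : 1 ≤ n) :
    (∀ x ∈ gTheta k n, ∀ y ∈ gTheta k n, x * y - y * x ∈ gTheta k n) ∧
    Module.finrank k (gTheta k n) = (n + 1) * (2 * n + 1) ∧
    ({x : Matrix (Unit ⊕ (Fin n ⊕ Fin n)) (Unit ⊕ (Fin n ⊕ Fin n)) k |
        x ∈ gTheta k n ∧ (∀ j, x (Sum.inl ()) j = 0) ∧ ∀ i, x i (Sum.inl ()) = 0}
      = (fun y : Matrix (Fin n ⊕ Fin n) (Fin n ⊕ Fin n) k =>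
          Matrix.fromBlocks (0 : Matrix Unit Unit k) 0 0 y) ''
        {y : Matrix (Fin n ⊕ Fin n) (Fin n ⊕ Fin n) k | yᵀ * Jsp k n = Jsp k n * y}) ∧
    (∀ x ∈ lieGTheta k n, ∀ y ∈ lieGTheta k n, x * y - y * x ∈ lieGTheta k n) ∧
    lieGTheta k n ≤ gTheta k n ∧ lieGTheta k n ≠ gTheta k n ∧
    Module.finrank k (lieGTheta k n) = 2 * n ^ 2 + n := by
  have hcard : Fintype.card (Unit ⊕ (Fin n ⊕ Fin n)) = 2 * n + 1 := by
    simp only [Fintype.card_sum, Fintype.card_unit, Fintype.card_fin]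
    omega
  have hcard2 : Fintype.card (Fin n ⊕ Fin n) = 2 * n := by
    simp only [Fintype.card_sum, Fintype.card_fin]
    omega
  refine ⟨?_, ?_, ?_, ?_, ?_, ?_, ?_⟩
  · intro x hx y hy
    exact bracket_symm (JN_transpose k n) hx hy
  · rw [finrank_Jsub (JN k n) (JN_sq k n) _ (fun x => Iff.rfl), hcard]
    have h2 : (2 * n + 1) * (2 * n + 1 + 1) = 2 * ((n + 1) * (2 * n + 1)) := by ring
    rw [h2, Nat.mul_div_cancel_left _ (by norm_num)]
  · ext x
    simp only [Set.mem_setOf_eq, Set.mem_image]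
    constructor
    · rintro ⟨h1, h2, h3⟩
      obtain ⟨y, hy, rfl⟩ := (mem_lie_iff _).1 ⟨h1, h2, h3⟩
      exact ⟨y, by show yᵀ * Jsp k n = Jsp k n * y; rw [← hy, Matrix.transpose_mul, Jsp_transpose], rfl⟩
    · rintro ⟨y, hy, rfl⟩
      have hy' : (Jsp k n * y)ᵀ = Jsp k n * y := by
        rw [Matrix.transpose_mul, Jsp_transpose, hy]
      exact (mem_lie_iff _).2 ⟨y, hy', rfl⟩
  · rintro x ⟨hx1, hx2, hx3⟩ y ⟨hy1, hy2, hy3⟩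
    refine ⟨bracket_symm (JN_transpose k n) hx1 hy1, fun j => ?_, fun i => ?_⟩
    · simp [Matrix.sub_apply, Matrix.mul_apply, hx2, hy2]
    · simp [Matrix.sub_apply, Matrix.mul_apply, hx3, hy3]
  · rintro x ⟨hx1, _, _⟩
    exact hx1
  · intro h
    have h1 : (1 : Matrix (Unit ⊕ (Fin n ⊕ Fin n)) (Unit ⊕ (Fin n ⊕ Fin n)) k) ∈ gTheta k n := by
      show (JN k n * 1)ᵀ = JN k n * 1
      rw [Matrix.mul_one, JN_transpose]
    rw [← h] at h1
    obtain ⟨_, h2, _⟩ := h1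
    simpa using h2 (Sum.inl ())
  · have he := (Submodule.equivMapOfInjective (blockEmbed k n) (blockEmbed_inj k n)
      (spSub k n)).finrank_eq
    rw [lie_eq_map, ← he, finrank_Jsub (Jsp k n) (Jsp_sq k n) _ (fun y => Iff.rfl), hcard2]
    have h2 : 2 * n * (2 * n + 1) = 2 * (2 * n ^ 2 + n) := by ring
    rw [h2, Nat.mul_div_cancel_left _ (by norm_num)]
end

section
/- Each x(ξ) lies in 𝔤^θ_nil = {x ∈ M_N(k) : ᵀ(J·x) = J·x, x nilpotent}, and for ξ ≠ ξ′ in k there is no h ∈ Sp_{2n}(k) such that [[1,0],[0,h]]·x(ξ)·[[1,0],[0,h]]⁻¹ = x(ξ′). Consequently, since k is infinite, the set 𝔤^θ_nil decomposes into infinitely many orbits under conjugation by G^θ = {[[1,0],[0,h]] : h ∈ Sp_{2n}(k)}. -/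
open Matrix

/-- The matrix `x(ξ)` acting on the basis `(e₀, e₁,…,eₙ, f₁,…,fₙ)` by:
`e₀ ↦ ξ·eₙ`, `e₁ ↦ 0`, `eᵢ ↦ e_{i−1}` for `2 ≤ i ≤ n`, `fⱼ ↦ f_{j+1}` for `1 ≤ j ≤ n−1`,
`fₙ ↦ eₙ + ξ·e₀`.  Here `e_{a+1}` has index `Sum.inr (Sum.inl a)` and `f_{b+1}` has index
`Sum.inr (Sum.inr b)` for `a b : Fin n`. -/
def xMat (k : Type*) [Field k] (n : ℕ) (ξ : k) :
    Matrix (Unit ⊕ (Fin n ⊕ Fin n)) (Unit ⊕ (Fin n ⊕ Fin n)) k :=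
  fun i j =>
    match i, j with
    | Sum.inl _, Sum.inl _ => 0
    | Sum.inl _, Sum.inr (Sum.inl _) => 0
    | Sum.inl _, Sum.inr (Sum.inr b) => if (b : ℕ) = n - 1 then ξ else 0
    | Sum.inr (Sum.inl a), Sum.inl _ => if (a : ℕ) = n - 1 then ξ else 0
    | Sum.inr (Sum.inl a), Sum.inr (Sum.inl b) => if (a : ℕ) + 1 = (b : ℕ) then 1 else 0
    | Sum.inr (Sum.inl a), Sum.inr (Sum.inr b) =>
        if (a : ℕ) = n - 1 ∧ (b : ℕ) = n - 1 then 1 else 0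
    | Sum.inr (Sum.inr _), Sum.inl _ => 0
    | Sum.inr (Sum.inr _), Sum.inr (Sum.inl _) => 0
    | Sum.inr (Sum.inr a), Sum.inr (Sum.inr b) => if (b : ℕ) + 1 = (a : ℕ) then 1 else 0

/-!
`x(ξ)` moves the basis vectors forward along the chain `f₁, …, fₙ, e₀, eₙ, …, e₁`, so it is
nilpotent, and `J·x(ξ)` is symmetric by inspection.  If `g = diag(1, h)` satisfies
`g·x(ξ) = x(ξ')·g`, the entries at `(e₀, fₙ)`, `(eₙ, e₀)` and `(eₙ, fₙ)` give `ξ = ξ'·p`,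
`p·ξ = ξ'` and `p = h(eₙ, eₙ) = h(fₙ, fₙ)`.  Hence `p²ξ = ξ`, and in characteristic `2` the
equation `p² = 1` forces `p = 1`, so `ξ = ξ'`.  Thus `ξ ↦ G^θ·x(ξ)` is injective on the
infinite field `k`.
-/

namespace Matrix

variable {R ι : Type*} [Semiring R] [Fintype ι] [DecidableEq ι]

theorem pow_apply_eq_zero_of_lt_add {A : Matrix ι ι R} {w : ι → ℕ}
    (hw : ∀ i j, A i j ≠ 0 → w i < w j) (m : ℕ) {i j : ι} (hij : w j < w i + m) :
    (A ^ m) i j = 0 := by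
  induction m generalizing j with
  | zero => exact one_apply_ne (by rintro rfl; omega)
  | succ m ih =>
    rw [pow_succ, mul_apply]
    refine Finset.sum_eq_zero fun l _ => ?_
    by_cases hl : w l < w i + m
    · rw [ih hl, zero_mul]
    · rw [not_ne_iff.mp (mt (hw l j) (by omega)), mul_zero]

theorem isNilpotent_of_weight_lt {A : Matrix ι ι R} (w : ι → ℕ)
    (hw : ∀ i j, A i j ≠ 0 → w i < w j) : IsNilpotent A :=
  ⟨Finset.univ.sup w + 1, ext fun i j =>
    pow_apply_eq_zero_of_lt_add hw _ (by have := Finset.le_sup (f := w) (Finset.mem_univ j); omega)⟩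

end Matrix

-- counts down along the chain `f₁, …, fₙ, e₀, eₙ, …, e₁`
def xMatWeight (n : ℕ) : Unit ⊕ (Fin n ⊕ Fin n) → ℕ
  | Sum.inl _ => n + 1
  | Sum.inr (Sum.inl a) => a + 1
  | Sum.inr (Sum.inr b) => 2 * n + 1 - b

theorem xMat_isNilpotent (k : Type*) [Field k] (n : ℕ) (ξ : k) : IsNilpotent (xMat k n ξ) := by
  refine Matrix.isNilpotent_of_weight_lt (xMatWeight n) fun i j hij => ?_
  rcases i with _ | a | a <;> rcases j with _ | b | b <;> simp only [xMat] at hij <;>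
    (try split_ifs at hij) <;> first | exact absurd rfl hij | (simp only [xMatWeight]; omega)

def swapEF (n : ℕ) : Unit ⊕ (Fin n ⊕ Fin n) ≃ Unit ⊕ (Fin n ⊕ Fin n) :=
  Equiv.sumCongr (Equiv.refl Unit) (Equiv.sumComm (Fin n) (Fin n))

theorem JN_eq_toMatrix (k : Type*) [Field k] (n : ℕ) :
    JN k n = (swapEF n).toPEquiv.toMatrix := by
  ext (_ | i | i) (_ | j | j) <;> simp [JN, Jsp, swapEF, one_apply]

theorem JN_mul_xMat_symm (k : Type*) [Field k] (n : ℕ) (ξ : k) :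
    (JN k n * xMat k n ξ)ᵀ = JN k n * xMat k n ξ := by
  rw [JN_eq_toMatrix, PEquiv.toMatrix_toPEquiv_mul]
  ext (_ | i | i) (_ | j | j) <;> simp [swapEF, xMat, eq_comm, and_comm]

theorem Fin.val_eq_iff_eq_last {m : ℕ} (b : Fin (m + 1)) : (b : ℕ) = m ↔ b = Fin.last m := by
  rw [Fin.ext_iff, Fin.val_last]

theorem CharTwo.eq_of_eq_mul_of_mul_eq {R : Type*} [CommRing R] [IsDomain R] [CharP R 2]
    {a b p : R} (ha : a = b * p) (hb : p * a = b) : a = b := by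
  rcases eq_or_ne a 0 with rfl | ha0
  · rw [← hb, mul_zero]
  · have hp : p ^ 2 = 1 ^ 2 := mul_left_cancel₀ ha0 (by linear_combination p * hb - ha)
    rw [← hb, CharTwo.sq_inj.mp hp, one_mul]

section

variable {k : Type*} [Field k] {n : ℕ}

theorem xMat_eq_of_fromBlocks_mul_eq [CharP k 2] (hn : 1 ≤ n) {ξ ξ' : k}
    (h : Matrix (Fin n ⊕ Fin n) (Fin n ⊕ Fin n) k)
    (hc : fromBlocks (1 : Matrix Unit Unit k) 0 0 h * xMat k n ξ =
      xMat k n ξ' * fromBlocks (1 : Matrix Unit Unit k) 0 0 h) : ξ = ξ' := by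
  obtain ⟨m, rfl⟩ := Nat.exists_eq_add_of_le' hn
  have hval_ne : ∀ b : Fin (m + 1), m + 1 ≠ b := fun b => b.isLt.ne'
  set p := h (Sum.inl (Fin.last m)) (Sum.inl (Fin.last m))
  have h₁ : ξ = ξ' * h (Sum.inr (Fin.last m)) (Sum.inr (Fin.last m)) := by
    simpa [mul_apply, Fintype.sum_sum_type, xMat, Fin.val_eq_iff_eq_last] using
      congr_fun₂ hc (Sum.inl ()) (Sum.inr (Sum.inr (Fin.last m)))
  have h₂ : p * ξ = ξ' := by
    simpa [mul_apply, Fintype.sum_sum_type, xMat, Fin.val_eq_iff_eq_last] using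
      congr_fun₂ hc (Sum.inr (Sum.inl (Fin.last m))) (Sum.inl ())
  have h₃ : p = h (Sum.inr (Fin.last m)) (Sum.inr (Fin.last m)) := by
    simpa [mul_apply, Fintype.sum_sum_type, xMat, Fin.val_eq_iff_eq_last, hval_ne] using
      congr_fun₂ hc (Sum.inr (Sum.inl (Fin.last m))) (Sum.inr (Sum.inr (Fin.last m)))
  exact CharTwo.eq_of_eq_mul_of_mul_eq (h₃ ▸ h₁) h₂

theorem xMat_eq_of_conj_eq [CharP k 2] (hn : 1 ≤ n) {ξ ξ' : k}
    (h : Matrix (Fin n ⊕ Fin n) (Fin n ⊕ Fin n) k) (hu : IsUnit h)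
    (heq : fromBlocks (1 : Matrix Unit Unit k) 0 0 h * xMat k n ξ *
      (fromBlocks (1 : Matrix Unit Unit k) 0 0 h)⁻¹ = xMat k n ξ') : ξ = ξ' := by
  refine xMat_eq_of_fromBlocks_mul_eq hn h ?_
  have hdet : IsUnit (fromBlocks (1 : Matrix Unit Unit k) 0 0 h).det := by
    rw [det_fromBlocks_zero₂₁, det_one, one_mul]
    exact (isUnit_iff_isUnit_det h).mp hu
  rw [← heq, nonsing_inv_mul_cancel_right _ _ hdet]

def thetaOrbit (x : Matrix (Unit ⊕ (Fin n ⊕ Fin n)) (Unit ⊕ (Fin n ⊕ Fin n)) k) :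
    Set (Matrix (Unit ⊕ (Fin n ⊕ Fin n)) (Unit ⊕ (Fin n ⊕ Fin n)) k) :=
  {y | ∃ h : Matrix (Fin n ⊕ Fin n) (Fin n ⊕ Fin n) k,
    IsUnit h ∧ hᵀ * Jsp k n * h = Jsp k n ∧
    y = fromBlocks (1 : Matrix Unit Unit k) 0 0 h * x *
      (fromBlocks (1 : Matrix Unit Unit k) 0 0 h)⁻¹}

theorem mem_thetaOrbit_self (x : Matrix (Unit ⊕ (Fin n ⊕ Fin n)) (Unit ⊕ (Fin n ⊕ Fin n)) k) :
    x ∈ thetaOrbit x :=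
  ⟨1, isUnit_one, by simp, by rw [fromBlocks_one, inv_one, one_mul, mul_one]⟩

theorem thetaOrbit_xMat_injective [CharP k 2] (hn : 1 ≤ n) :
    Function.Injective fun ξ : k => thetaOrbit (xMat k n ξ) := by
  intro ξ ξ' (hξ : thetaOrbit (xMat k n ξ) = thetaOrbit (xMat k n ξ'))
  obtain ⟨h, hu, -, heq⟩ : xMat k n ξ' ∈ thetaOrbit (xMat k n ξ) :=
    hξ ▸ mem_thetaOrbit_self _
  exact xMat_eq_of_conj_eq hn h hu heq.symm

end

/-- Each `x(ξ)` lies in `𝔤^θ_nil`, distinct `ξ ≠ ξ′` give elements which are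
not conjugate under `G^θ = {[[1,0],[0,h]] : h ∈ Sp_{2n}(k)}`, and consequently (since `k`
is infinite) `𝔤^θ_nil` decomposes into infinitely many `G^θ`-orbits. -/
theorem stmt_6 (k : Type) [Field k] [IsAlgClosed k] [CharP k 2] (n : ℕ) (hn : 1 ≤ n) :
    (∀ ξ : k, (JN k n * xMat k n ξ)ᵀ = JN k n * xMat k n ξ ∧ IsNilpotent (xMat k n ξ)) ∧
    (∀ ξ ξ' : k, ξ ≠ ξ' →
      ¬ ∃ h : Matrix (Fin n ⊕ Fin n) (Fin n ⊕ Fin n) k,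
        IsUnit h ∧ hᵀ * Jsp k n * h = Jsp k n ∧
        Matrix.fromBlocks (1 : Matrix Unit Unit k) 0 0 h * xMat k n ξ *
          (Matrix.fromBlocks (1 : Matrix Unit Unit k) 0 0 h)⁻¹ = xMat k n ξ') ∧
    {s : Set (Matrix (Unit ⊕ (Fin n ⊕ Fin n)) (Unit ⊕ (Fin n ⊕ Fin n)) k) |
      ∃ x, (JN k n * x)ᵀ = JN k n * x ∧ IsNilpotent x ∧
        s = {y | ∃ h : Matrix (Fin n ⊕ Fin n) (Fin n ⊕ Fin n) k,
          IsUnit h ∧ hᵀ * Jsp k n * h = Jsp k n ∧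
          y = Matrix.fromBlocks (1 : Matrix Unit Unit k) 0 0 h * x *
            (Matrix.fromBlocks (1 : Matrix Unit Unit k) 0 0 h)⁻¹}}.Infinite := by
  refine ⟨fun ξ => ⟨JN_mul_xMat_symm k n ξ, xMat_isNilpotent k n ξ⟩, ?_, ?_⟩
  · rintro ξ ξ' hne ⟨h, hu, -, heq⟩
    exact hne (xMat_eq_of_conj_eq hn h hu heq)
  · exact Set.infinite_of_injective_forall_mem (thetaOrbit_xMat_injective hn)
      fun ξ => ⟨xMat k n ξ, JN_mul_xMat_symm k n ξ, xMat_isNilpotent k n ξ, rfl⟩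
end

section
/- For every ξ ∈ k one has x(ξ)^{2n+1} = 0, and if ξ ≠ 0 then x(ξ)^{2n} ≠ 0; that is, for ξ ≠ 0 the matrix x(ξ) is a regular nilpotent element of M_{2n+1}(k) (a single Jordan block of size 2n+1), while x(0) is nilpotent with x(0)^{2n} = 0. -/
open Matrix

lemma pow_eq_zero_of_height {k : Type} [Field k] {ι : Type} [Fintype ι] [DecidableEq ι]
    (M : Matrix ι ι k) (h : ι → ℕ) (c : ℕ) (hb : ∀ i, h i < c)
    (hM : ∀ i j, M i j ≠ 0 → h i < h j) : M ^ c = 0 := by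
  have key : ∀ m i j, (M ^ m) i j ≠ 0 → h i + m ≤ h j := by
    intro m
    induction m with
    | zero =>
      intro i j hij
      simp only [pow_zero, Matrix.one_apply] at hij
      by_cases hij2 : i = j
      · subst hij2; omega
      · simp [hij2] at hij
    | succ m ih =>
      intro i j hij
      rw [pow_succ', Matrix.mul_apply] at hij
      obtain ⟨l, -, hl⟩ := Finset.exists_ne_zero_of_sum_ne_zero hij
      have h1 := hM i l (left_ne_zero_of_mul hl)
      have h2 := ih l j (right_ne_zero_of_mul hl)
      omega
  ext i j
  by_contra hij
  have := key c i j hij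
  have := hb j
  omega

lemma xMat_pow_zero {k : Type} [Field k] {n : ℕ} (hn : 1 ≤ n) (ξ : k) :
    xMat k n ξ ^ (2 * n + 1) = 0 := by
  refine pow_eq_zero_of_height (xMat k n ξ)
    (Sum.elim (fun _ => n) (Sum.elim (fun a => (a : ℕ)) (fun b => 2 * n - (b : ℕ)))) _ ?_ ?_
  · rintro (⟨⟩ | a | b) <;> simp <;> omega
  · rintro (⟨⟩ | ⟨a, ha⟩ | ⟨a, ha⟩) (⟨⟩ | ⟨b, hb⟩ | ⟨b, hb⟩) hij <;>
      simp only [xMat, Sum.elim_inl, Sum.elim_inr, Fin.val_mk] at hij ⊢ <;>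
      (try exact absurd rfl hij) <;> split_ifs at hij with hc <;> simp_all <;> omega

lemma xMat0_pow_zero {k : Type} [Field k] {n : ℕ} (hn : 1 ≤ n) :
    xMat k n (0 : k) ^ (2 * n) = 0 := by
  refine pow_eq_zero_of_height (xMat k n 0)
    (Sum.elim (fun _ => 0) (Sum.elim (fun a => (a : ℕ)) (fun b => 2 * n - 1 - (b : ℕ)))) _ ?_ ?_
  · rintro (⟨⟩ | a | b) <;> simp <;> omega
  · rintro (⟨⟩ | ⟨a, ha⟩ | ⟨a, ha⟩) (⟨⟩ | ⟨b, hb⟩ | ⟨b, hb⟩) hij <;>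
      simp only [xMat, Sum.elim_inl, Sum.elim_inr, Fin.val_mk] at hij ⊢ <;>
      (try exact absurd rfl hij) <;> split_ifs at hij with hc <;> simp_all <;> omega

section chain
variable {k : Type} [Field k] {n : ℕ} (ξ c : k)

lemma xMat_LA (a : Fin n) (ha : (a : ℕ) + 1 < n) :
    xMat k n ξ *ᵥ Pi.single (Sum.inr (Sum.inr a)) c
      = Pi.single (Sum.inr (Sum.inr (⟨(a : ℕ) + 1, ha⟩ : Fin n))) c := by
  rw [Matrix.mulVec_single]
  funext i
  obtain ⟨a, ha'⟩ := a
  simp only [Fin.val_mk] at ha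
  rcases i with ⟨⟩ | ⟨b, hb⟩ | ⟨b, hb⟩ <;>
    simp [xMat, Pi.single_apply, Fin.ext_iff, Fin.val_mk, ite_mul] <;>
    (try split_ifs) <;> first | rfl | omega | (intros; exfalso; omega)

lemma xMat_LB (hn : 1 ≤ n) :
    xMat k n ξ *ᵥ Pi.single (Sum.inr (Sum.inr (⟨n - 1, by omega⟩ : Fin n))) c
      = Pi.single (Sum.inl ()) (ξ * c)
        + Pi.single (Sum.inr (Sum.inl (⟨n - 1, by omega⟩ : Fin n))) c := by
  rw [Matrix.mulVec_single]
  funext i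
  rcases i with ⟨⟩ | ⟨b, hb⟩ | ⟨b, hb⟩ <;>
    simp [xMat, Pi.single_apply, Fin.ext_iff, Fin.val_mk, ite_mul] <;>
    (try split_ifs) <;> first | rfl | omega | (intros; exfalso; omega)

lemma xMat_LC (hn : 1 ≤ n) :
    xMat k n ξ *ᵥ Pi.single (Sum.inl ()) c
      = Pi.single (Sum.inr (Sum.inl (⟨n - 1, by omega⟩ : Fin n))) (ξ * c) := by
  rw [Matrix.mulVec_single]
  funext i
  rcases i with ⟨⟩ | ⟨b, hb⟩ | ⟨b, hb⟩ <;>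
    simp [xMat, Pi.single_apply, Fin.ext_iff, Fin.val_mk, ite_mul] <;>
    (try split_ifs) <;> first | rfl | omega | (intros; exfalso; omega)

lemma xMat_LD (a : Fin n) (ha : 1 ≤ (a : ℕ)) :
    xMat k n ξ *ᵥ Pi.single (Sum.inr (Sum.inl a)) c
      = Pi.single (Sum.inr (Sum.inl (⟨(a : ℕ) - 1, by omega⟩ : Fin n))) c := by
  rw [Matrix.mulVec_single]
  funext i
  obtain ⟨a, ha'⟩ := a
  simp only [Fin.val_mk] at ha
  rcases i with ⟨⟩ | ⟨b, hb⟩ | ⟨b, hb⟩ <;>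
    simp [xMat, Pi.single_apply, Fin.ext_iff, Fin.val_mk, ite_mul] <;>
    (try split_ifs) <;> first | rfl | omega | (intros; exfalso; omega)

lemma xMat_LE (hn : 1 ≤ n) :
    xMat k n ξ *ᵥ Pi.single (Sum.inr (Sum.inl (⟨0, by omega⟩ : Fin n))) c = 0 := by
  rw [Matrix.mulVec_single]
  funext i
  rcases i with ⟨⟩ | ⟨b, hb⟩ | ⟨b, hb⟩ <;>
    simp [xMat, Pi.single_apply, Fin.ext_iff, Fin.val_mk, ite_mul] <;>
    (try split_ifs) <;> first | rfl | omega | (intros; exfalso; omega)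

end chain

section pow
variable {k : Type} [Field k] {n : ℕ} (hn : 1 ≤ n) (ξ : k)

lemma xMat_chain :
    xMat k n ξ ^ (2 * n) *ᵥ Pi.single (Sum.inr (Sum.inr (⟨0, hn⟩ : Fin n))) 1
      = Pi.single (Sum.inr (Sum.inl (⟨0, hn⟩ : Fin n))) (ξ * ξ) := by
  set M := xMat k n ξ with hM
  set s₀ : (Unit ⊕ (Fin n ⊕ Fin n)) → k := Pi.single (Sum.inr (Sum.inr (⟨0, hn⟩ : Fin n))) 1
    with hs₀
  have h1 : ∀ m (hm : m < n), M ^ m *ᵥ s₀ = Pi.single (Sum.inr (Sum.inr (⟨m, hm⟩ : Fin n))) 1 := by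
    intro m
    induction m with
    | zero => intro hm; rw [pow_zero, Matrix.one_mulVec]
    | succ m ih =>
      intro hm
      rw [pow_succ', ← Matrix.mulVec_mulVec, ih (by omega)]
      exact xMat_LA ξ 1 ⟨m, by omega⟩ hm
  have h2 : M ^ n *ᵥ s₀
      = Pi.single (Sum.inl ()) ξ
        + Pi.single (Sum.inr (Sum.inl (⟨n - 1, by omega⟩ : Fin n))) 1 := by
    have e : M ^ n = M * M ^ (n - 1) := by
      rw [← pow_succ']; congr 1; omega
    rw [e, ← Matrix.mulVec_mulVec, h1 (n - 1) (by omega)]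
    have := xMat_LB ξ 1 hn
    rw [this, mul_one]
  have h3 : 2 ≤ n → ∀ t, t ≤ n - 2 →
      M ^ (n + 1 + t) *ᵥ s₀
        = Pi.single (Sum.inr (Sum.inl (⟨n - t - 2, by omega⟩ : Fin n))) 1
          + Pi.single (Sum.inr (Sum.inl (⟨n - t - 1, by omega⟩ : Fin n))) (ξ * ξ) := by
    intro hn2 t
    induction t with
    | zero =>
      intro ht
      rw [show n + 1 + 0 = n + 1 from rfl, pow_succ', ← Matrix.mulVec_mulVec, h2,
        Matrix.mulVec_add, xMat_LC ξ ξ hn, xMat_LD ξ 1 ⟨n - 1, by omega⟩ (by simp; omega)]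
      rw [add_comm]
      congr 1
    | succ t ih =>
      intro ht
      have e : M ^ (n + 1 + (t + 1)) = M * M ^ (n + 1 + t) := by
        rw [← pow_succ']; congr 1
      rw [e, ← Matrix.mulVec_mulVec, ih (by omega), Matrix.mulVec_add,
        xMat_LD ξ 1 ⟨n - t - 2, by omega⟩ (by simp; omega),
        xMat_LD ξ (ξ * ξ) ⟨n - t - 1, by omega⟩ (by simp; omega)]
      congr 2 <;> exact Fin.ext (by simp; omega)
  rcases eq_or_lt_of_le hn with h | h
  · -- n = 1
    have hn1 : n = 1 := h.symm
    subst hn1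
    have e : M ^ 2 = M * M ^ 1 := by rw [← pow_succ']
    rw [show 2 * 1 = 2 from rfl, e, ← Matrix.mulVec_mulVec, pow_one]
    have hMs : M *ᵥ s₀ = Pi.single (Sum.inl ()) ξ
        + Pi.single (Sum.inr (Sum.inl (⟨0, by omega⟩ : Fin 1))) 1 := by
      have := h2; rwa [pow_one] at this
    rw [hMs, Matrix.mulVec_add, xMat_LC ξ ξ hn, xMat_LE ξ 1 hn, add_zero]
  · -- n ≥ 2
    have e : M ^ (2 * n) = M * M ^ (n + 1 + (n - 2)) := by
      rw [← pow_succ']; congr 1; omega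
    rw [e, ← Matrix.mulVec_mulVec, h3 h (n - 2) le_rfl, Matrix.mulVec_add]
    have e1 : (⟨n - (n - 2) - 2, by omega⟩ : Fin n) = ⟨0, hn⟩ := Fin.ext (by simp; omega)
    have e2 : (⟨n - (n - 2) - 1, by omega⟩ : Fin n) = ⟨1, by omega⟩ := Fin.ext (by simp; omega)
    rw [e1, e2, xMat_LE ξ 1 hn, xMat_LD ξ (ξ * ξ) ⟨1, by omega⟩ (by simp), zero_add]
    congr 1

end pow


/-- `x(ξ)^{2n+1} = 0` for every `ξ`; if `ξ ≠ 0` then `x(ξ)^{2n} ≠ 0`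
(so `x(ξ)` is a regular nilpotent element, a single Jordan block of size `2n+1`), while
`x(0)` is nilpotent with `x(0)^{2n} = 0`. -/
theorem stmt_7 (k : Type) [Field k] [IsAlgClosed k] [CharP k 2] (n : ℕ) (hn : 1 ≤ n) :
    (∀ ξ : k, xMat k n ξ ^ (2 * n + 1) = 0) ∧
    (∀ ξ : k, ξ ≠ 0 → xMat k n ξ ^ (2 * n) ≠ 0) ∧
    xMat k n 0 ^ (2 * n) = 0 := by
  refine ⟨fun ξ => xMat_pow_zero hn ξ, fun ξ hξ hpow => ?_, xMat0_pow_zero hn⟩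
  have hc := xMat_chain hn ξ
  rw [hpow, Matrix.zero_mulVec] at hc
  have := congrFun hc.symm (Sum.inr (Sum.inl (⟨0, hn⟩ : Fin n)))
  rw [Pi.single_eq_same] at this
  exact hξ (mul_self_eq_zero.mp this)
end

section
/- If h ∈ Sp_{2n}(k) commutes with y (i.e. h·y = y·h), then h has block form [[f₁, g₁],[0, ᵀf₁⁻¹]] (n×n blocks) where f₁ is upper triangular with all diagonal entries equal to 1 (upper unitriangular). In particular, the centralizer of y in Sp_{2n}(k) is contained in the set of such block matrices. -/
open Matrix

/-- The regular nilpotent matrix `y` acting on the basis `(e₁,…,eₙ, f₁,…,fₙ)` by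
`e₁ ↦ 0`, `eᵢ ↦ e_{i−1}` for `2 ≤ i ≤ n`, `fⱼ ↦ f_{j+1}` for `1 ≤ j ≤ n−1`, `fₙ ↦ eₙ`.
Here `e_{a+1}` has index `Sum.inl a` and `f_{b+1}` has index `Sum.inr b` for `a b : Fin n`. -/
def yMat (k : Type*) [Field k] (n : ℕ) :
    Matrix (Fin n ⊕ Fin n) (Fin n ⊕ Fin n) k :=
  fun i j =>
    match i, j with
    | Sum.inl a, Sum.inl b => if (a : ℕ) + 1 = (b : ℕ) then 1 else 0
    | Sum.inl a, Sum.inr b => if (a : ℕ) = n - 1 ∧ (b : ℕ) = n - 1 then 1 else 0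
    | Sum.inr _, Sum.inl _ => 0
    | Sum.inr a, Sum.inr b => if (b : ℕ) + 1 = (a : ℕ) then 1 else 0

section Aux
variable {k : Type} [Field k] {n : ℕ} (h : Matrix (Fin n ⊕ Fin n) (Fin n ⊕ Fin n) k)

lemma lemA (i) (a b : Fin n) (hab : (a:ℕ)+1 = (b:ℕ)) :
    (h * yMat k n) i (Sum.inl b) = h i (Sum.inl a) := by
  rw [Matrix.mul_apply, Fintype.sum_sum_type]
  have key : ∀ r : Fin n, ((r:ℕ)+1 = (b:ℕ)) ↔ r = a := by
    intro r; rw [← hab]; constructor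
    · intro hr; exact Fin.ext (by omega)
    · rintro rfl; rfl
  simp [yMat, key, Finset.sum_ite_eq']

lemma lemC (i) (a b : Fin n) (hab : (a:ℕ)+1 = (b:ℕ)) :
    (h * yMat k n) i (Sum.inr a) = h i (Sum.inr b) := by
  rw [Matrix.mul_apply, Fintype.sum_sum_type]
  have key : ∀ r : Fin n, ((a:ℕ)+1 = (r:ℕ)) ↔ r = b := by
    intro r; rw [hab]; exact ⟨fun hr => Fin.ext hr.symm, fun hr => hr ▸ rfl⟩
  have hb : (a:ℕ) ≠ n - 1 := by have := b.isLt; omega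
  simp [yMat, key, hb, Finset.sum_ite_eq']

lemma lemD (i) (a b : Fin n) (ha : (a:ℕ) = n-1) (hb : (b:ℕ) = n-1) :
    (h * yMat k n) i (Sum.inr a) = h i (Sum.inl b) := by
  rw [Matrix.mul_apply, Fintype.sum_sum_type]
  have key1 : ∀ r : Fin n, ((r:ℕ) = n-1 ∧ (a:ℕ) = n-1) ↔ r = b := by
    intro r; constructor
    · intro hr; exact Fin.ext (by omega)
    · rintro rfl; exact ⟨hb, ha⟩
  have key2 : ∀ r : Fin n, ¬((a:ℕ)+1 = (r:ℕ)) := by intro r; have := r.isLt; omega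
  simp [yMat, key1, key2, Finset.sum_ite_eq']

lemma lemE (j) (a b : Fin n) (hab : (a:ℕ)+1 = (b:ℕ)) :
    (yMat k n * h) (Sum.inl a) j = h (Sum.inl b) j := by
  rw [Matrix.mul_apply, Fintype.sum_sum_type]
  have key : ∀ r : Fin n, ((a:ℕ)+1 = (r:ℕ)) ↔ r = b := by
    intro r; rw [hab]; exact ⟨fun hr => Fin.ext hr.symm, fun hr => hr ▸ rfl⟩
  have ha : (a:ℕ) ≠ n - 1 := by have := b.isLt; omega
  simp [yMat, key, ha, Finset.sum_ite_eq']

lemma lemF (j) (a b : Fin n) (ha : (a:ℕ) = n-1) (hb : (b:ℕ) = n-1) :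
    (yMat k n * h) (Sum.inl a) j = h (Sum.inr b) j := by
  rw [Matrix.mul_apply, Fintype.sum_sum_type]
  have key1 : ∀ r : Fin n, ((a:ℕ) = n-1 ∧ (r:ℕ) = n-1) ↔ r = b := by
    intro r; constructor
    · intro hr; exact Fin.ext (by omega)
    · rintro rfl; exact ⟨ha, hb⟩
  have key2 : ∀ r : Fin n, ¬((a:ℕ)+1 = (r:ℕ)) := by intro r; have := r.isLt; omega
  simp [yMat, key1, key2, Finset.sum_ite_eq']

lemma lemG (j) (a b : Fin n) (hab : (b:ℕ)+1 = (a:ℕ)) :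
    (yMat k n * h) (Sum.inr a) j = h (Sum.inr b) j := by
  rw [Matrix.mul_apply, Fintype.sum_sum_type]
  have key : ∀ r : Fin n, ((r:ℕ)+1 = (a:ℕ)) ↔ r = b := by
    intro r; rw [← hab]; exact ⟨fun hr => Fin.ext (by omega), fun hr => hr ▸ rfl⟩
  simp [yMat, key, Finset.sum_ite_eq']

lemma lemH (j) (a : Fin n) (ha : (a:ℕ) = 0) :
    (yMat k n * h) (Sum.inr a) j = 0 := by
  rw [Matrix.mul_apply, Fintype.sum_sum_type]
  have key : ∀ r : Fin n, ¬((r:ℕ)+1 = (a:ℕ)) := by intro r; omega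
  simp [yMat, key]

end Aux

open Matrix

def idx (n p : ℕ) (hp : p < 2*n) : Fin n ⊕ Fin n :=
  if h : p < n then .inr ⟨p, h⟩ else .inl ⟨2*n-1-p, by omega⟩

lemma idx_lt {n p : ℕ} (hp : p < 2*n) (h : p < n) : idx n p hp = .inr ⟨p, h⟩ := dif_pos h
lemma idx_ge {n p : ℕ} (hp : p < 2*n) (h : ¬ p < n) :
    idx n p hp = .inl ⟨2*n-1-p, by omega⟩ := dif_neg h

section Aux2
variable {k : Type} [Field k] {n : ℕ} (h : Matrix (Fin n ⊕ Fin n) (Fin n ⊕ Fin n) k)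
  (hcomm : h * yMat k n = yMat k n * h)
include hcomm

lemma step (p q : ℕ) (hp : p < 2*n) (hq : q < 2*n) (hp1 : 1 ≤ p) (hq1 : 1 ≤ q) :
    h (idx n p hp) (idx n q hq) =
    h (idx n (p-1) (by omega)) (idx n (q-1) (by omega)) := by
  have col : ∀ i, h i (idx n q hq) = (h * yMat k n) i (idx n (q-1) (by omega)) := by
    intro i
    rcases lt_trichotomy q n with hqn | hqn | hqn
    · rw [idx_lt hq hqn, idx_lt (by omega) (by omega : q-1 < n),
        lemC h i ⟨q-1, by omega⟩ ⟨q, hqn⟩ (by simp; omega)]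
    · rw [idx_ge hq (by omega), idx_lt (by omega) (by omega : q-1 < n),
        lemD h i ⟨q-1, by omega⟩ ⟨2*n-1-q, by omega⟩ (by simp; omega) (by simp; omega)]
    · rw [idx_ge hq (by omega), idx_ge (by omega) (by omega : ¬ q-1 < n),
        lemA h i ⟨2*n-1-q, by omega⟩ ⟨2*n-1-(q-1), by omega⟩ (by simp; omega)]
  have row : ∀ j, (yMat k n * h) (idx n p hp) j = h (idx n (p-1) (by omega)) j := by
    intro j
    rcases lt_trichotomy p n with hpn | hpn | hpn
    · rw [idx_lt hp hpn, idx_lt (by omega) (by omega : p-1 < n),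
        lemG h j ⟨p, hpn⟩ ⟨p-1, by omega⟩ (by simp; omega)]
    · rw [idx_ge hp (by omega), idx_lt (by omega) (by omega : p-1 < n),
        lemF h j ⟨2*n-1-p, by omega⟩ ⟨p-1, by omega⟩ (by simp; omega) (by simp; omega)]
    · rw [idx_ge hp (by omega), idx_ge (by omega) (by omega : ¬ p-1 < n),
        lemE h j ⟨2*n-1-p, by omega⟩ ⟨2*n-1-(p-1), by omega⟩ (by simp; omega)]
  rw [col, hcomm, row]

lemma zeroRow (q : ℕ) (hq : q < 2*n) (hq1 : 1 ≤ q) :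
    h (idx n 0 (by omega)) (idx n q hq) = 0 := by
  have col : h (idx n 0 (by omega)) (idx n q hq)
      = (h * yMat k n) (idx n 0 (by omega)) (idx n (q-1) (by omega)) := by
    rcases lt_trichotomy q n with hqn | hqn | hqn
    · rw [idx_lt hq hqn, idx_lt (by omega) (by omega : q-1 < n),
        lemC h _ ⟨q-1, by omega⟩ ⟨q, hqn⟩ (by simp; omega)]
    · rw [idx_ge hq (by omega), idx_lt (by omega) (by omega : q-1 < n),
        lemD h _ ⟨q-1, by omega⟩ ⟨2*n-1-q, by omega⟩ (by simp; omega) (by simp; omega)]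
    · rw [idx_ge hq (by omega), idx_ge (by omega) (by omega : ¬ q-1 < n),
        lemA h _ ⟨2*n-1-q, by omega⟩ ⟨2*n-1-(q-1), by omega⟩ (by simp; omega)]
  rw [col, hcomm, idx_lt (by omega) (by omega : (0:ℕ) < n), lemH h _ ⟨0, by omega⟩ rfl]

lemma shift (t p q : ℕ) (hp : p < 2*n) (hq : q < 2*n) (htp : t ≤ p) (htq : t ≤ q) :
    h (idx n p hp) (idx n q hq) = h (idx n (p-t) (by omega)) (idx n (q-t) (by omega)) := by
  induction t with
  | zero => simp
  | succ m ih =>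
    rw [ih (by omega) (by omega), step h hcomm (p-m) (q-m) (by omega) (by omega)
      (by omega) (by omega)]
    congr 2 <;> omega

lemma vanish (p q : ℕ) (hp : p < 2*n) (hq : q < 2*n) (hpq : p < q) :
    h (idx n p hp) (idx n q hq) = 0 := by
  rw [shift h hcomm p p q hp hq le_rfl (by omega)]
  have : p - p = 0 := by omega
  rw [show h (idx n (p-p) (by omega)) (idx n (q-p) (by omega))
      = h (idx n 0 (by omega)) (idx n (q-p) (by omega)) by congr 2 <;> omega]
  exact zeroRow h hcomm (q-p) (by omega) (by omega)

end Aux2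


/-- If `h ∈ Sp_{2n}(k)` commutes with the regular nilpotent element `y`, then
`h = [[f₁, g₁],[0, (f₁ᵀ)⁻¹]]` with `f₁` upper unitriangular. -/
theorem stmt_8 (k : Type) [Field k] [IsAlgClosed k] [CharP k 2] (n : ℕ) (hn : 1 ≤ n)
    (h : Matrix (Fin n ⊕ Fin n) (Fin n ⊕ Fin n) k)
    (hu : IsUnit h) (hsp : hᵀ * Jsp k n * h = Jsp k n)
    (hcomm : h * yMat k n = yMat k n * h) :
    ∃ f₁ g₁ : Matrix (Fin n) (Fin n) k,
      (∀ i j : Fin n, (j : ℕ) < (i : ℕ) → f₁ i j = 0) ∧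
      (∀ i : Fin n, f₁ i i = 1) ∧
      h = Matrix.fromBlocks f₁ g₁ 0 (f₁ᵀ)⁻¹ := by
  set A := h.toBlocks₁₁ with hA
  set B := h.toBlocks₁₂ with hB
  set C := h.toBlocks₂₁ with hCdef
  set D := h.toBlocks₂₂ with hD
  have hidx1 : ∀ a : Fin n, (Sum.inr a : Fin n ⊕ Fin n) = idx n (a:ℕ) (by have := a.isLt; omega) := by
    intro a; exact (idx_lt _ a.isLt).symm
  have hidx2 : ∀ b : Fin n, (Sum.inl b : Fin n ⊕ Fin n) = idx n (2*n-1-(b:ℕ)) (by have := b.isLt; omega) := by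
    intro b
    rw [idx_ge (by have := b.isLt; omega) (by have := b.isLt; omega)]
    congr 1
    exact Fin.ext (by have := b.isLt; simp; omega)
  have hC : C = 0 := by
    ext a b
    show h (Sum.inr a) (Sum.inl b) = 0
    rw [hidx1 a, hidx2 b]
    exact vanish h hcomm _ _ _ _ (by have := a.isLt; have := b.isLt; omega)
  have hAtri : ∀ i j : Fin n, (j:ℕ) < (i:ℕ) → A i j = 0 := by
    intro i j hij
    show h (Sum.inl i) (Sum.inl j) = 0
    rw [hidx2 i, hidx2 j]
    exact vanish h hcomm _ _ _ _ (by have := i.isLt; have := j.isLt; omega)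
  have hDA : D = Aᵀ := by
    ext a b
    show h (Sum.inr a) (Sum.inr b) = h (Sum.inl b) (Sum.inl a)
    rw [hidx1 a, hidx1 b, hidx2 b, hidx2 a]
    rw [shift h hcomm (2*n-1-(a:ℕ)-(b:ℕ)) (2*n-1-(b:ℕ)) (2*n-1-(a:ℕ))
      (by have := a.isLt; have := b.isLt; omega) (by have := a.isLt; have := b.isLt; omega)
      (by omega) (by omega)]
    congr 2 <;> [skip; skip] <;> omega
  have hh : h = Matrix.fromBlocks A B C D := (Matrix.fromBlocks_toBlocks h).symm
  rw [hh, hC] at hsp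
  simp only [Jsp, Matrix.fromBlocks_transpose, Matrix.fromBlocks_multiply,
    Matrix.transpose_zero, Matrix.mul_zero, Matrix.zero_mul, Matrix.mul_one, Matrix.one_mul,
    add_zero, zero_add] at hsp
  have h12 := congrArg Matrix.toBlocks₁₂ hsp
  simp only [Matrix.toBlocks_fromBlocks₁₂] at h12
  -- h12 : Aᵀ * D = 1
  have h12' : Aᵀ * Aᵀ = 1 := by rw [hDA] at h12; exact h12
  have hinv : (Aᵀ)⁻¹ = Aᵀ := Matrix.inv_eq_right_inv h12'
  have hdiag : ∀ i, A i i = 1 := by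
    intro i
    have hs : A i i * A i i = 1 := by
      have hii := congrFun (congrFun h12' i) i
      rw [Matrix.mul_apply, Finset.sum_eq_single i] at hii
      · simpa [Matrix.one_apply, Matrix.transpose_apply] using hii
      · intro r _ hr
        simp only [Matrix.transpose_apply]
        rcases lt_or_gt_of_ne (fun hc => hr (Fin.ext hc) : (r:ℕ) ≠ (i:ℕ)) with hlt | hgt
        · rw [hAtri i r hlt, mul_zero]
        · rw [hAtri r i hgt, zero_mul]
      · intro hmem; exact absurd (Finset.mem_univ i) hmem
    have h2 : (2:k) = 0 := by exact_mod_cast (CharP.cast_eq_zero k 2)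
    have hx : (A i i - 1)^2 = 0 := by
      calc (A i i - 1)^2 = A i i * A i i - 2 * A i i + 1 := by ring
      _ = 2 - 2 * A i i := by rw [hs]; ring
      _ = 0 := by rw [h2]; ring
    have := (pow_eq_zero_iff (two_ne_zero)).mp hx
    exact sub_eq_zero.mp this
  refine ⟨A, B, hAtri, hdiag, ?_⟩
  rw [hinv, ← hDA, ← hC, ← hh]
end

section
/- If x ∈ 𝔰𝔭_{2n}(k) is diagonalizable, then there exists g ∈ Sp_{2n}(k) such that g·x·g⁻¹ = diag(t₁,…,tₙ,t₁,…,tₙ) for some t₁,…,tₙ ∈ k; that is, every semisimple element of 𝔰𝔭_{2n}(k) is Sp_{2n}(k)-conjugate to an element of 𝔱. -/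
/-!
The columns of `u⁻¹` form an eigenbasis of `x` with eigenvalues `d`; let `G = (u⁻¹)ᵀ J u⁻¹` be
the Gram matrix of the form in this basis. It is nondegenerate and alternating (in
characteristic 2, `Jsp` is Mathlib's alternating `Matrix.J`), and it commutes with `diagonal d`
because `x` is self-adjoint for the form: eigenvectors with distinct eigenvalues are orthogonal.

Symplectic Gram–Schmidt then runs inside the eigenspaces. For a basis vector `a` pick `b` with
`G b a ≠ 0`; it has the same eigenvalue as `a`. A unitriangular block congruence, which commutes
with `diagonal d`, splits `G` into the hyperbolic plane of `a, b` and the Schur complement, which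
again satisfies all hypotheses. Induction gives `P` with `Pᵀ J P = J` and `x P = P diag(t, t)`,
and `g = P⁻¹` is the required symplectic matrix.
-/

open Matrix

namespace Matrix

variable {α : Type*} [CommRing α] {m n : Type*} [Fintype m] [Fintype n] [DecidableEq m]
  [DecidableEq n]

theorem isAlt_toBilin'_transpose_mul_mul {G : Matrix m m α} (hG : G.toBilin'.IsAlt)
    (P : Matrix m n α) : (Pᵀ * G * P).toBilin'.IsAlt := by
  rw [← toBilin'_comp]
  exact fun v => hG _

theorem isAlt_toBilin'_submatrix {G : Matrix m m α} (hG : G.toBilin'.IsAlt) (f : n → m) :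
    (G.submatrix f f).toBilin'.IsAlt := by
  have hP : ((1 : Matrix m m α).submatrix id f)ᵀ * G * (1 : Matrix m m α).submatrix id f =
      G.submatrix f f := by
    ext i j
    simp [Matrix.mul_apply, Matrix.one_apply]
  rw [← hP]
  exact isAlt_toBilin'_transpose_mul_mul hG _

theorem transpose_eq_neg_of_isAlt_toBilin' {G : Matrix m m α} (hG : G.toBilin'.IsAlt) :
    Gᵀ = -G := by
  ext i j
  rw [transpose_apply, neg_apply, ← toBilin'_single G i j, hG.neg_eq, toBilin'_single]

theorem apply_self_eq_zero_of_isAlt_toBilin' {G : Matrix m m α} (hG : G.toBilin'.IsAlt) (i : m) :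
    G i i = 0 := by
  rw [← toBilin'_single G i i]
  exact hG _

theorem isAlt_toBilin'_J (l : Type*) [Fintype l] [DecidableEq l] : (J l α).toBilin'.IsAlt := by
  intro v
  simp [toBilin'_apply', J, dotProduct, Fintype.sum_sum_type, mulVec, fromBlocks, one_apply,
    mul_comm]

section Schur

variable (A : Matrix m m α) (B : Matrix m n α) (C : Matrix n m α) (D : Matrix n n α) [Invertible A]

theorem transpose_mul_fromBlocks_mul_eq_of_invertible₁₁
    (hskew : (fromBlocks A B C D)ᵀ = -fromBlocks A B C D) :
    (fromBlocks 1 (-(⅟A * B)) 0 1)ᵀ * fromBlocks A B C D * fromBlocks 1 (-(⅟A * B)) 0 1 =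
      fromBlocks A 0 0 (D - C * ⅟A * B) := by
  rw [fromBlocks_transpose, fromBlocks_neg, fromBlocks_inj] at hskew
  obtain ⟨hA, -, hB, -⟩ := hskew
  have hAinv : (⅟A)ᵀ = -⅟A := by
    have hleft : -(⅟A)ᵀ * A = 1 := by
      rw [Matrix.neg_mul, ← Matrix.mul_neg, ← hA, ← transpose_mul, mul_invOf_self, transpose_one]
    exact neg_eq_iff_eq_neg.mp (invOf_eq_left_inv hleft).symm
  have hCA : (⅟A * B)ᵀ = C * ⅟A := by
    rw [transpose_mul, hAinv, hB, Matrix.neg_mul, Matrix.mul_neg, neg_neg]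
  simp only [fromBlocks_transpose, transpose_one, transpose_zero, transpose_neg, hCA,
    fromBlocks_multiply, Matrix.one_mul, Matrix.mul_one, Matrix.zero_mul, Matrix.mul_zero,
    add_zero, Matrix.neg_mul, Matrix.mul_neg, Matrix.mul_invOf_cancel_left,
    Matrix.invOf_mul_cancel_right, neg_add_cancel, neg_add_eq_sub, sub_zero]

theorem isAlt_toBilin'_schur (hM : (fromBlocks A B C D).toBilin'.IsAlt) :
    (D - C * ⅟A * B).toBilin'.IsAlt := by
  have h := isAlt_toBilin'_transpose_mul_mul hM (fromBlocks (1 : Matrix m m α) (-(⅟A * B)) 0 1)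
  rw [transpose_mul_fromBlocks_mul_eq_of_invertible₁₁ A B C D
    (transpose_eq_neg_of_isAlt_toBilin' hM)] at h
  exact isAlt_toBilin'_submatrix h Sum.inr

theorem isUnit_det_schur (hM : IsUnit (fromBlocks A B C D).det) :
    IsUnit (D - C * ⅟A * B).det := by
  rw [det_fromBlocks₁₁] at hM
  exact isUnit_of_mul_isUnit_right hM

variable {A B C D}

theorem commute_diagonal_schur_of_commute (d₁ : m → α) (d₂ : n → α)
    (h : Commute (diagonal (Sum.elim d₁ d₂)) (fromBlocks A B C D)) :
    Commute (diagonal d₂) (D - C * ⅟A * B) ∧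
      Commute (diagonal (Sum.elim d₁ d₂)) (fromBlocks 1 (-(⅟A * B)) 0 1) := by
  rw [← fromBlocks_diagonal, Commute, SemiconjBy, fromBlocks_multiply, fromBlocks_multiply,
    fromBlocks_inj] at h
  simp only [Matrix.zero_mul, Matrix.mul_zero, add_zero, zero_add] at h
  obtain ⟨hA, hB, hC, hD⟩ := h
  have hA' : diagonal d₁ * ⅟A = ⅟A * diagonal d₁ := (Commute.invOf_right hA).eq
  have hAB : diagonal d₁ * (⅟A * B) = ⅟A * B * diagonal d₂ := by
    rw [← Matrix.mul_assoc, hA', Matrix.mul_assoc, hB, Matrix.mul_assoc]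
  have hCAB : diagonal d₂ * (C * ⅟A * B) = C * ⅟A * B * diagonal d₂ := by
    rw [Matrix.mul_assoc C, ← Matrix.mul_assoc, hC, Matrix.mul_assoc, hAB]
    simp only [Matrix.mul_assoc]
  constructor
  · rw [Commute, SemiconjBy, Matrix.mul_sub, Matrix.sub_mul, hD, hCAB]
  · rw [← fromBlocks_diagonal, Commute, SemiconjBy, fromBlocks_multiply, fromBlocks_multiply]
    simp only [Matrix.mul_one, Matrix.one_mul, Matrix.zero_mul, Matrix.mul_zero, add_zero,
      zero_add, Matrix.mul_neg, Matrix.neg_mul, neg_zero, hAB]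

end Schur

theorem fromBlocks_submatrix_sumSumSumComm {β κ₁ κ₂ : Type*} [Zero β]
    (A₁ B₁ C₁ D₁ : Matrix κ₁ κ₁ β) (A₂ B₂ C₂ D₂ : Matrix κ₂ κ₂ β) :
    (fromBlocks (fromBlocks A₁ B₁ C₁ D₁) 0 0 (fromBlocks A₂ B₂ C₂ D₂)).submatrix
        (Equiv.sumSumSumComm κ₁ κ₁ κ₂ κ₂).symm (Equiv.sumSumSumComm κ₁ κ₁ κ₂ κ₂).symm =
      fromBlocks (fromBlocks A₁ 0 0 A₂) (fromBlocks B₁ 0 0 B₂) (fromBlocks C₁ 0 0 C₂)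
        (fromBlocks D₁ 0 0 D₂) := by
  ext (i | i) (j | j) <;> rcases i with i | i <;> rcases j with j | j <;> rfl

theorem J_submatrix_sumSumSumComm (κ₁ κ₂ : Type*) [DecidableEq κ₁] [DecidableEq κ₂] :
    (fromBlocks (J κ₁ α) 0 0 (J κ₂ α)).submatrix (Equiv.sumSumSumComm κ₁ κ₁ κ₂ κ₂).symm
      (Equiv.sumSumSumComm κ₁ κ₁ κ₂ κ₂).symm = J (κ₁ ⊕ κ₂) α := by
  have hneg : fromBlocks (-1 : Matrix κ₁ κ₁ α) 0 0 (-1 : Matrix κ₂ κ₂ α) = -1 := by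
    rw [← fromBlocks_one, fromBlocks_neg]
    simp only [neg_zero]
  rw [J, J, J, fromBlocks_submatrix_sumSumSumComm, fromBlocks_zero, fromBlocks_one, hneg]

theorem commute_diagonal_submatrix {ι ι' : Type*} [Fintype ι] [DecidableEq ι] [Fintype ι']
    [DecidableEq ι'] {G : Matrix ι ι α} {d : ι → α} (e : ι' ≃ ι)
    (h : Commute (diagonal d) G) : Commute (diagonal (d ∘ e)) (G.submatrix e e) := by
  rw [← submatrix_diagonal_equiv, Commute, SemiconjBy, submatrix_mul_equiv, submatrix_mul_equiv,
    h.eq]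

section Conjugation

variable {ι : Type*} [Fintype ι] {Ω x : Matrix ι ι α}

theorem commute_diagonal_transpose_mul_mul {ι' : Type*} [Fintype ι'] [DecidableEq ι']
    {P : Matrix ι ι' α} {d : ι' → α} (hx : xᵀ * Ω = Ω * x) (hxP : x * P = P * diagonal d) :
    Commute (diagonal d) (Pᵀ * Ω * P) :=
  calc diagonal d * (Pᵀ * Ω * P) = (x * P)ᵀ * Ω * P := by
        simp only [hxP, transpose_mul, diagonal_transpose, Matrix.mul_assoc]
    _ = Pᵀ * (xᵀ * Ω) * P := by simp only [transpose_mul, Matrix.mul_assoc]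
    _ = Pᵀ * Ω * P * diagonal d := by simp only [hx, ← hxP, Matrix.mul_assoc]

variable [DecidableEq ι]

theorem isUnit_det_of_transpose_mul_mul_eq {P : Matrix ι ι α} (hΩ : IsUnit Ω.det)
    (hP : Pᵀ * Ω * P = Ω) : IsUnit P.det := by
  have h := congrArg det hP
  rw [det_mul, det_mul, det_transpose, mul_right_comm] at h
  exact IsUnit.of_mul_eq_one _ (hΩ.mul_right_cancel (h.trans (one_mul _).symm))

theorem transpose_nonsing_inv_mul_mul_eq {P : Matrix ι ι α} (hP : IsUnit P.det)
    (hPΩ : Pᵀ * Ω * P = Ω) : (P⁻¹)ᵀ * Ω * P⁻¹ = Ω :=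
  calc (P⁻¹)ᵀ * Ω * P⁻¹ = (P * P⁻¹)ᵀ * Ω * (P * P⁻¹) := by
        conv_lhs => rw [← hPΩ]
        simp only [transpose_mul, Matrix.mul_assoc]
    _ = Ω := by rw [mul_nonsing_inv _ hP, transpose_one, Matrix.one_mul, Matrix.mul_one]

end Conjugation

end Matrix

variable {α : Type*} [CommRing α]

/-- The columns of `Q` form a basis of eigenvectors of `diagonal d` which is symplectic, in the
convention of `Matrix.J`, for the bilinear form with Gram matrix `G`. -/
def HasSymplecticEigenbasis {ι : Type*} [Fintype ι] [DecidableEq ι] (G : Matrix ι ι α)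
    (d : ι → α) : Prop :=
  ∃ (κ : Type) (_ : Fintype κ) (_ : DecidableEq κ) (Q : Matrix ι (κ ⊕ κ) α) (t : κ → α),
    Fintype.card (κ ⊕ κ) = Fintype.card ι ∧ Qᵀ * G * Q = J κ α ∧
      diagonal d * Q = Q * diagonal (Sum.elim t t)

namespace HasSymplecticEigenbasis

variable {ι ι' : Type*} [Fintype ι] [DecidableEq ι] [Fintype ι'] [DecidableEq ι']

theorem of_submatrix {G : Matrix ι ι α} {d : ι → α} (e : ι' ≃ ι)
    (h : HasSymplecticEigenbasis (G.submatrix e e) (d ∘ e)) : HasSymplecticEigenbasis G d := by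
  obtain ⟨κ, _, _, Q, t, hcard, hQ, hd⟩ := h
  refine ⟨κ, inferInstance, inferInstance, Q.submatrix e.symm id, t, ?_, ?_, ?_⟩
  · rw [hcard, Fintype.card_congr e]
  · have hG : G = (G.submatrix e e).submatrix e.symm e.symm := by simp
    rw [hG, transpose_submatrix, submatrix_mul_equiv _ _ _ e.symm, submatrix_mul_equiv,
      submatrix_id_id, hQ]
  · have hD : diagonal d = (diagonal (d ∘ e)).submatrix e.symm e.symm := by
      simp [submatrix_diagonal_equiv, Function.comp_assoc]
    rw [hD, submatrix_mul_equiv, hd]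
    ext i j
    simp [mul_diagonal]

theorem exists_square {l : Type*} [Fintype l] [DecidableEq l]
    {G : Matrix (l ⊕ l) (l ⊕ l) α} {d : l ⊕ l → α} (h : HasSymplecticEigenbasis G d) :
    ∃ (Q : Matrix (l ⊕ l) (l ⊕ l) α) (t : l → α),
      Qᵀ * G * Q = J l α ∧ diagonal d * Q = Q * diagonal (Sum.elim t t) := by
  obtain ⟨κ, _, _, Q, t, hcard, hQ, hd⟩ := h
  have e : κ ≃ l := Fintype.equivOfCardEq <| by
    simp only [Fintype.card_sum] at hcard
    omega
  set σ := Equiv.sumCongr e e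
  refine ⟨Q.submatrix id σ.symm, t ∘ e.symm, ?_, ?_⟩
  · change (Qᵀ * G * Q).submatrix σ.symm σ.symm = _
    rw [hQ]
    ext (i | i) (j | j) <;> simp [J, σ, one_apply]
  · have hT : diagonal (Sum.elim (t ∘ e.symm) (t ∘ e.symm)) =
        (diagonal (Sum.elim t t)).submatrix σ.symm σ.symm := by
      rw [submatrix_diagonal_equiv]
      congr 1
      ext (i | i) <;> rfl
    change (diagonal d * Q).submatrix id σ.symm = _
    rw [hd, hT, submatrix_mul_equiv]

end HasSymplecticEigenbasis

theorem hasSymplecticEigenbasis_of_isEmpty {ι : Type*} [Fintype ι] [DecidableEq ι] [IsEmpty ι]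
    (G : Matrix ι ι α) (d : ι → α) : HasSymplecticEigenbasis G d :=
  ⟨Empty, inferInstance, inferInstance, 0, 0, by simp, Subsingleton.elim _ _,
    Subsingleton.elim _ _⟩

section FromBlocks

variable {m n : Type*} [Fintype m] [Fintype n] [DecidableEq m] [DecidableEq n]
  {A : Matrix m m α} {B : Matrix m n α} {C : Matrix n m α} {D : Matrix n n α} [Invertible A]
  {d₁ : m → α} {d₂ : n → α}

theorem hasSymplecticEigenbasis_fromBlocks (hM : (fromBlocks A B C D).toBilin'.IsAlt)
    (hcomm : Commute (diagonal (Sum.elim d₁ d₂)) (fromBlocks A B C D))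
    (h₁ : HasSymplecticEigenbasis A d₁) (h₂ : HasSymplecticEigenbasis (D - C * ⅟A * B) d₂) :
    HasSymplecticEigenbasis (fromBlocks A B C D) (Sum.elim d₁ d₂) := by
  obtain ⟨κ₁, _, _, Q₁, t₁, hcard₁, hQ₁, hd₁⟩ := h₁
  obtain ⟨κ₂, _, _, Q₂, t₂, hcard₂, hQ₂, hd₂⟩ := h₂
  set U := fromBlocks (1 : Matrix m m α) (-(⅟A * B)) 0 (1 : Matrix n n α)
  set F := Equiv.sumSumSumComm κ₁ κ₁ κ₂ κ₂
  set Q := U * fromBlocks Q₁ 0 0 Q₂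
  have hUQ : Qᵀ * fromBlocks A B C D * Q = fromBlocks (J κ₁ α) 0 0 (J κ₂ α) := by
    calc Qᵀ * fromBlocks A B C D * Q
        = (fromBlocks Q₁ 0 0 Q₂)ᵀ * (Uᵀ * fromBlocks A B C D * U) * fromBlocks Q₁ 0 0 Q₂ := by
          simp only [Q, transpose_mul, Matrix.mul_assoc]
      _ = fromBlocks (J κ₁ α) 0 0 (J κ₂ α) := by
          rw [transpose_mul_fromBlocks_mul_eq_of_invertible₁₁ A B C D
              (transpose_eq_neg_of_isAlt_toBilin' hM),
            fromBlocks_transpose, fromBlocks_multiply, fromBlocks_multiply]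
          simp only [transpose_zero, Matrix.zero_mul, Matrix.mul_zero, add_zero, zero_add, hQ₁,
            hQ₂]
  have hdQ : diagonal (Sum.elim d₁ d₂) * Q =
      Q * diagonal (Sum.elim (Sum.elim t₁ t₁) (Sum.elim t₂ t₂)) := by
    rw [← Matrix.mul_assoc, (commute_diagonal_schur_of_commute d₁ d₂ hcomm).2.eq, Matrix.mul_assoc,
      Matrix.mul_assoc]
    congr 1
    rw [← fromBlocks_diagonal, ← fromBlocks_diagonal, fromBlocks_multiply, fromBlocks_multiply]
    simp [hd₁, hd₂]
  have hT : diagonal (Sum.elim (Sum.elim t₁ t₂) (Sum.elim t₁ t₂)) =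
      (diagonal (Sum.elim (Sum.elim t₁ t₁) (Sum.elim t₂ t₂))).submatrix F.symm F.symm := by
    rw [submatrix_diagonal_equiv]
    congr 1
    ext ((i | i) | (i | i)) <;> rfl
  refine ⟨κ₁ ⊕ κ₂, inferInstance, inferInstance, Q.submatrix id F.symm, Sum.elim t₁ t₂, ?_, ?_, ?_⟩
  · simp only [Fintype.card_sum] at *
    omega
  · change (Qᵀ * fromBlocks A B C D * Q).submatrix F.symm F.symm = _
    rw [hUQ, J_submatrix_sumSumSumComm]
  · change (diagonal (Sum.elim d₁ d₂) * Q).submatrix id F.symm = _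
    rw [hdQ, hT, submatrix_mul_equiv]

end FromBlocks

section HyperbolicPair

variable {ι : Type*} [DecidableEq ι] {a b : ι}

def pairEquiv (hab : a ≠ b) : (Unit ⊕ Unit) ⊕ {i // i ≠ a ∧ i ≠ b} ≃ ι where
  toFun := Sum.elim (Sum.elim (fun _ => a) (fun _ => b)) Subtype.val
  invFun i := if h₁ : i = a then Sum.inl (Sum.inl ()) else
    if h₂ : i = b then Sum.inl (Sum.inr ()) else Sum.inr ⟨i, h₁, h₂⟩
  left_inv := by
    rintro ((_ | _) | ⟨i, h₁, h₂⟩)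
    · simp
    · simp [hab.symm]
    · simp [h₁, h₂]
  right_inv i := by
    by_cases h₁ : i = a
    · simp [h₁]
    · by_cases h₂ : i = b <;> simp [h₁, h₂, hab.symm]

variable [Fintype ι]

theorem toBlocks₁₁_submatrix_pairEquiv {G : Matrix ι ι α} (hG : G.toBilin'.IsAlt) (hab : a ≠ b) :
    (G.submatrix (pairEquiv hab) (pairEquiv hab)).toBlocks₁₁ = G b a • J Unit α := by
  have hba : G a b = -G b a := by
    rw [← transpose_apply G b a, transpose_eq_neg_of_isAlt_toBilin' hG, neg_apply]
  ext (_ | _) (_ | _) <;>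
    simp [toBlocks₁₁, pairEquiv, J, apply_self_eq_zero_of_isAlt_toBilin' hG, hba]

theorem exists_hyperbolic_partner [IsDomain α] {G : Matrix ι ι α} {d : ι → α}
    (hG : G.toBilin'.IsAlt) (hdet : IsUnit G.det) (hcomm : Commute (diagonal d) G) (a : ι) :
    ∃ b, a ≠ b ∧ G b a ≠ 0 ∧ d a = d b := by
  obtain ⟨b, hb⟩ : ∃ b, G b a ≠ 0 := by
    by_contra! h
    exact hdet.ne_zero (det_eq_zero_of_column_eq_zero a h)
  refine ⟨b, ?_, hb, ?_⟩
  · rintro rfl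
    exact hb (apply_self_eq_zero_of_isAlt_toBilin' hG a)
  · have h := congrFun₂ hcomm.eq b a
    rw [diagonal_mul, mul_diagonal, mul_comm] at h
    exact (mul_left_cancel₀ hb h).symm

end HyperbolicPair

section GramSchmidt

variable {k : Type*} [Field k]

theorem hasSymplecticEigenbasis_smul_J (κ : Type) [Fintype κ] [DecidableEq κ]
    {c : k} (hc : c ≠ 0) (e : k) : HasSymplecticEigenbasis (c • J κ k) (fun _ => e) := by
  refine ⟨κ, inferInstance, inferInstance, fromBlocks 1 0 0 (c⁻¹ • 1), fun _ => e, rfl, ?_, ?_⟩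
  · simp [J, fromBlocks_transpose, fromBlocks_multiply, fromBlocks_smul, hc]
  · ext i (j | j) <;> simp [mul_comm]

theorem hasSymplecticEigenbasis_of_toBlocks₁₁_eq_smul_J {κ : Type} {n : Type*} [Fintype κ]
    [DecidableEq κ] [Fintype n] [DecidableEq n] {M : Matrix ((κ ⊕ κ) ⊕ n) ((κ ⊕ κ) ⊕ n) k}
    {c e : k} {d₂ : n → k}
    (hc : c ≠ 0) (h₁₁ : M.toBlocks₁₁ = c • J κ k) (hM : M.toBilin'.IsAlt) (hdet : IsUnit M.det)
    (hcomm : Commute (diagonal (Sum.elim (fun _ => e) d₂)) M)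
    (hS : ∀ S : Matrix n n k, S.toBilin'.IsAlt → IsUnit S.det → Commute (diagonal d₂) S →
      HasSymplecticEigenbasis S d₂) :
    HasSymplecticEigenbasis M (Sum.elim (fun _ => e) d₂) := by
  rw [← fromBlocks_toBlocks M, h₁₁] at hM hdet hcomm ⊢
  have : Invertible (c • J κ k) := invertibleOfIsUnitDet _ <| by
    rw [det_smul]
    exact (hc.isUnit.pow _).mul (isUnit_det_J κ k)
  exact hasSymplecticEigenbasis_fromBlocks hM hcomm (hasSymplecticEigenbasis_smul_J κ hc e)
    (hS _ (isAlt_toBilin'_schur _ _ _ _ hM) (isUnit_det_schur _ _ _ _ hdet)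
      (commute_diagonal_schur_of_commute _ _ hcomm).1)

theorem hasSymplecticEigenbasis_of_isAlt {ι : Type*} [Fintype ι] [DecidableEq ι]
    {G : Matrix ι ι k} {d : ι → k} (hG : G.toBilin'.IsAlt) (hdet : IsUnit G.det)
    (hcomm : Commute (diagonal d) G) : HasSymplecticEigenbasis G d := by
  induction h : Fintype.card ι using Nat.strong_induction_on generalizing ι with
  | _ N ih =>
  rcases isEmpty_or_nonempty ι with hι | ⟨⟨a⟩⟩
  · exact hasSymplecticEigenbasis_of_isEmpty G d
  obtain ⟨b, hab, hba, hdab⟩ := exists_hyperbolic_partner hG hdet hcomm a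
  let E := pairEquiv hab
  have hdE : d ∘ E = Sum.elim (fun _ => d a) (d ∘ E ∘ Sum.inr) := by
    ext ((_ | _) | i)
    exacts [rfl, hdab.symm, rfl]
  refine HasSymplecticEigenbasis.of_submatrix E ?_
  rw [hdE]
  refine hasSymplecticEigenbasis_of_toBlocks₁₁_eq_smul_J hba
    (toBlocks₁₁_submatrix_pairEquiv hG hab) (isAlt_toBilin'_submatrix hG E)
    (by rwa [det_submatrix_equiv_self]) (hdE ▸ commute_diagonal_submatrix E hcomm)
    fun S hS hSdet hScomm => ih _ ?_ hS hSdet hScomm rfl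
  rw [← h]
  exact Fintype.card_subtype_lt (x := a) (by simp)

end GramSchmidt

theorem Jsp_eq_J (k : Type*) [Field k] [CharP k 2] (n : ℕ) : Jsp k n = J (Fin n) k := by
  ext (i | i) (j | j) <;> simp [Jsp, J, one_apply, CharTwo.neg_eq]

theorem stmt_9_general (k : Type) [Field k] [CharP k 2] (n : ℕ)
    (x : Matrix (Fin n ⊕ Fin n) (Fin n ⊕ Fin n) k)
    (hx : xᵀ * Jsp k n = Jsp k n * x)
    (hdiag : ∃ u : Matrix (Fin n ⊕ Fin n) (Fin n ⊕ Fin n) k, IsUnit u ∧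
      ∃ d : Fin n ⊕ Fin n → k, u * x * u⁻¹ = Matrix.diagonal d) :
    ∃ g : Matrix (Fin n ⊕ Fin n) (Fin n ⊕ Fin n) k,
      IsUnit g ∧ gᵀ * Jsp k n * g = Jsp k n ∧
      ∃ t : Fin n → k,
        g * x * g⁻¹ = Matrix.fromBlocks (Matrix.diagonal t) 0 0 (Matrix.diagonal t) := by
  obtain ⟨u, hu, d, hux⟩ := hdiag
  rw [Jsp_eq_J] at hx ⊢
  have hu : IsUnit u.det := (isUnit_iff_isUnit_det u).mp hu
  have hxu : x * u⁻¹ = u⁻¹ * diagonal d := by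
    rw [← hux, ← Matrix.mul_assoc, ← Matrix.mul_assoc, nonsing_inv_mul _ hu, Matrix.one_mul]
  have hGdet : IsUnit ((u⁻¹)ᵀ * J (Fin n) k * u⁻¹).det := by
    simp only [det_mul, det_transpose]
    exact ((isUnit_nonsing_inv_det _ hu).mul (isUnit_det_J _ _)).mul (isUnit_nonsing_inv_det _ hu)
  obtain ⟨Q, t, hQ, hdQ⟩ := (hasSymplecticEigenbasis_of_isAlt
    (isAlt_toBilin'_transpose_mul_mul (isAlt_toBilin'_J _) _) hGdet
    (commute_diagonal_transpose_mul_mul hx hxu)).exists_square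
  set P := u⁻¹ * Q with hPdef
  have hP : Pᵀ * J (Fin n) k * P = J (Fin n) k := by
    simpa only [P, transpose_mul, Matrix.mul_assoc] using hQ
  have hxP : x * P = P * diagonal (Sum.elim t t) := by
    rw [hPdef, ← Matrix.mul_assoc, hxu, Matrix.mul_assoc, hdQ, Matrix.mul_assoc]
  have hPdet := isUnit_det_of_transpose_mul_mul_eq (isUnit_det_J _ _) hP
  refine ⟨P⁻¹, (isUnit_iff_isUnit_det _).mpr (isUnit_nonsing_inv_det _ hPdet),
    transpose_nonsing_inv_mul_mul_eq hPdet hP, t, ?_⟩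
  rw [nonsing_inv_nonsing_inv _ hPdet, fromBlocks_diagonal, Matrix.mul_assoc, hxP,
    nonsing_inv_mul_cancel_left _ _ hPdet]

/-- Every diagonalizable (semisimple) element of `𝔰𝔭_{2n}(k)` is
`Sp_{2n}(k)`-conjugate to an element `diag(t₁,…,tₙ,t₁,…,tₙ)` of `𝔱`. -/
theorem stmt_9 (k : Type) [Field k] [IsAlgClosed k] [CharP k 2] (n : ℕ) (hn : 1 ≤ n)
    (x : Matrix (Fin n ⊕ Fin n) (Fin n ⊕ Fin n) k)
    (hx : xᵀ * Jsp k n = Jsp k n * x)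
    (hdiag : ∃ u : Matrix (Fin n ⊕ Fin n) (Fin n ⊕ Fin n) k, IsUnit u ∧
      ∃ d : Fin n ⊕ Fin n → k, u * x * u⁻¹ = Matrix.diagonal d) :
    ∃ g : Matrix (Fin n ⊕ Fin n) (Fin n ⊕ Fin n) k,
      IsUnit g ∧ gᵀ * Jsp k n * g = Jsp k n ∧
      ∃ t : Fin n → k,
        g * x * g⁻¹ = Matrix.fromBlocks (Matrix.diagonal t) 0 0 (Matrix.diagonal t) :=
  stmt_9_general k n x hx hdiag
end

section
/- If x ∈ 𝔟 is diagonalizable, then there exists g ∈ B such that g·x·g⁻¹ ∈ 𝔱; that is, every semisimple element of the Borel subalgebra 𝔟 is B-conjugate to an element of 𝔱. -/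
open Matrix

/-!
The argument runs on the consequence `ker (x - α)² = ker (x - α)` (for every scalar `α`) of
diagonalizability, which passes to conjugates and to the diagonal blocks of block upper
triangular matrices. For `M = [[diag s, B], [0, diag t]]`, conjugating by `[[1, Q], [0, 1]]`
with `Q i j = B i j / (s i - t j)` removes the entries of `B` with `s i ≠ t j`, and the
property forces the remaining ones to vanish, so `M` becomes `diag (s, t)`.

Splitting `Fin (m + 1) = Fin m ⊕ Fin 1`, this conjugates an upper triangular block `a` of `x`
to its diagonal `D` by an invertible upper triangular `p`, by induction on the size. Then
`diag (p, p⁻ᵀ)` conjugates `x` to `[[D, p b pᵀ], [0, D]]`, and the `Q` that clears it is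
skew-symmetric because `p b pᵀ` is symmetric; this is exactly what makes the resulting
conjugator `[[p, Q p⁻ᵀ], [0, p⁻ᵀ]]` symplectic.
-/

namespace Matrix

variable {k : Type*} [Field k]

section NoJordanChains

variable {ι κ : Type*} [Fintype ι] [DecidableEq ι] [Fintype κ] [DecidableEq κ]

def NoJordanChains (M : Matrix ι ι k) : Prop :=
  ∀ (α : k) (v : ι → k), (M - α • 1) *ᵥ (M - α • 1) *ᵥ v = 0 → (M - α • 1) *ᵥ v = 0

theorem noJordanChains_diagonal (d : ι → k) : NoJordanChains (diagonal d) := by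
  intro α v hv
  have hsub : diagonal d - α • 1 = diagonal fun i => d i - α := by
    rw [smul_one_eq_diagonal, diagonal_sub]
  rw [hsub] at hv ⊢
  funext i
  have hi : (d i - α) * ((d i - α) * v i) = 0 := by
    simpa [mulVec_diagonal] using congrFun hv i
  rw [mulVec_diagonal]
  exact (mul_eq_zero.1 hi).elim (fun h => by simp [h]) id

theorem NoJordanChains.of_mul_eq_mul {M M' g : Matrix ι ι k} (hM : NoJordanChains M)
    (hg : IsUnit g) (h : g * M = M' * g) : NoJordanChains M' := by
  intro α v hv
  have hdet := (isUnit_iff_isUnit_det g).1 hg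
  have hN : (M' - α • 1) * g = g * (M - α • 1) := by
    simp only [sub_mul, mul_sub, h, smul_mul_assoc, mul_smul_comm, one_mul, mul_one]
  obtain ⟨w, rfl⟩ : ∃ w, g *ᵥ w = v := ⟨g⁻¹ *ᵥ v, by simp [mul_nonsing_inv g hdet]⟩
  have hcomm : ∀ u, (M' - α • 1) *ᵥ g *ᵥ u = g *ᵥ (M - α • 1) *ᵥ u := fun u => by
    rw [mulVec_mulVec, mulVec_mulVec, hN]
  have hinj : ∀ u, g *ᵥ u = 0 → u = 0 := fun u hu => by
    simpa [nonsing_inv_mul g hdet] using congrArg (g⁻¹ *ᵥ ·) hu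
  rw [hcomm, hcomm] at hv
  rw [hcomm, hM α w (hinj _ hv), mulVec_zero]

theorem NoJordanChains.submatrix_equiv {M : Matrix ι ι k} (hM : NoJordanChains M)
    (e : κ ≃ ι) : NoJordanChains (M.submatrix e e) := by
  intro α v hv
  have hsub : M.submatrix e e - α • 1 = (M - α • 1).submatrix e e := by
    ext i j
    simp [one_apply, e.injective.eq_iff]
  rw [hsub] at hv ⊢
  have key := hM α (v ∘ e.symm) (funext fun i => by
    simpa [submatrix_mulVec_equiv, Function.comp_assoc] using congrFun hv (e.symm i))
  funext i
  simpa [submatrix_mulVec_equiv] using congrFun key (e i)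

end NoJordanChains

section Sylvester

variable {l m : Type*}

-- Solves `diagonal s * Q - Q * diagonal t = B` at the entries where `s i ≠ t j`.
open scoped Classical in
noncomputable def sylvesterSolution (s : l → k) (t : m → k) (B : Matrix l m k) :
    Matrix l m k :=
  of fun i j => if s i = t j then 0 else B i j / (s i - t j)

open scoped Classical in
noncomputable def resonantPart (s : l → k) (t : m → k) (B : Matrix l m k) : Matrix l m k :=
  of fun i j => if s i = t j then B i j else 0

theorem sylvesterSolution_transpose (s : l → k) (t : m → k) (B : Matrix l m k) :
    (sylvesterSolution s t B)ᵀ = -sylvesterSolution t s Bᵀ := by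
  ext i j
  by_cases h : s j = t i
  · simp [sylvesterSolution, h]
  · simp only [transpose_apply, neg_apply, sylvesterSolution, of_apply, if_neg h,
      if_neg (Ne.symm h)]
    rw [← neg_sub, div_neg]

variable [DecidableEq l] [DecidableEq m]

theorem fromBlocks_sub_smul_one (A : Matrix l l k) (B : Matrix l m k) (C : Matrix m l k)
    (D : Matrix m m k) (α : k) :
    fromBlocks A B C D - α • 1 = fromBlocks (A - α • 1) B C (D - α • 1) := by
  simp only [sub_eq_add_neg, ← fromBlocks_one, fromBlocks_smul, fromBlocks_neg, fromBlocks_add,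
    smul_zero, neg_zero, add_zero]

variable [Fintype l] [Fintype m]

theorem fromBlocks_sylvesterSolution_mul (s : l → k) (t : m → k) (B : Matrix l m k) :
    fromBlocks 1 (sylvesterSolution s t B) 0 1 * fromBlocks (diagonal s) B 0 (diagonal t) =
      fromBlocks (diagonal s) (resonantPart s t B) 0 (diagonal t) *
        fromBlocks 1 (sylvesterSolution s t B) 0 1 := by
  simp only [fromBlocks_multiply, Matrix.one_mul, Matrix.mul_one, Matrix.zero_mul,
    Matrix.mul_zero, add_zero, zero_add]
  congr 1
  ext i j
  by_cases h : s i = t j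
  · simp [sylvesterSolution, resonantPart, h]
  · have h' : s i - t j ≠ 0 := sub_ne_zero.2 h
    simp only [sylvesterSolution, resonantPart, add_apply, mul_diagonal, diagonal_mul, of_apply,
      h, if_false, add_zero]
    field_simp
    ring

theorem NoJordanChains.fromBlocks_topLeft {A : Matrix l l k} {B : Matrix l m k}
    {D : Matrix m m k} (h : NoJordanChains (fromBlocks A B 0 D)) : NoJordanChains A := by
  intro α v hv
  have hlift : ∀ w, (fromBlocks A B 0 D - α • 1) *ᵥ Sum.elim w 0 =
      Sum.elim ((A - α • 1) *ᵥ w) 0 := fun w => by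
    rw [fromBlocks_sub_smul_one, fromBlocks_mulVec]
    simp
  have := h α (Sum.elim v 0) (by rw [hlift, hlift, hv, Sum.elim_zero_zero])
  rw [hlift] at this
  exact funext fun i => congrFun this (Sum.inl i)

theorem NoJordanChains.resonantPart_eq_zero {s : l → k} {t : m → k} {B : Matrix l m k}
    (h : NoJordanChains (fromBlocks (diagonal s) (resonantPart s t B) 0 (diagonal t))) :
    resonantPart s t B = 0 := by
  ext i j
  set R := resonantPart s t B
  have hN : fromBlocks (diagonal s) R 0 (diagonal t) - t j • 1 =
      fromBlocks (diagonal fun i => s i - t j) R 0 (diagonal fun i => t i - t j) := by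
    rw [fromBlocks_sub_smul_one, smul_one_eq_diagonal, smul_one_eq_diagonal, diagonal_sub,
      diagonal_sub]
  have hv : (fromBlocks (diagonal s) R 0 (diagonal t) - t j • 1) *ᵥ Pi.single (Sum.inr j) 1
      = Sum.elim (fun i => R i j) 0 := by
    rw [hN, mulVec_single_one]
    ext (i | i) <;> simp +contextual [diagonal_apply]
  -- `R` vanishes wherever `s i ≠ t j`, so `N` kills its column `j`
  have hRv : (fromBlocks (diagonal s) R 0 (diagonal t) - t j • 1) *ᵥ
      Sum.elim (fun i => R i j) 0 = 0 := by
    rw [hN, fromBlocks_mulVec]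
    ext (i | i) <;> simp +contextual [mulVec_diagonal, R, resonantPart]
  have := h (t j) _ (by rw [hv, hRv])
  simpa [hv] using congrFun this (Sum.inl i)

theorem NoJordanChains.fromBlocks_conj_diagonal {A P : Matrix l l k} {B : Matrix l m k}
    {D R : Matrix m m k} {s : l → k} {t : m → k} (h : NoJordanChains (fromBlocks A B 0 D))
    (hP : IsUnit P) (hR : IsUnit R) (hPA : P * A = diagonal s * P)
    (hRD : R * D = diagonal t * R) :
    fromBlocks P (sylvesterSolution s t (P * B * R⁻¹) * R) 0 R * fromBlocks A B 0 D =
      fromBlocks (diagonal s) 0 0 (diagonal t) *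
        fromBlocks P (sylvesterSolution s t (P * B * R⁻¹) * R) 0 R := by
  set B' := P * B * R⁻¹
  set Q := sylvesterSolution s t B'
  have h₁ : fromBlocks P 0 0 R * fromBlocks A B 0 D =
      fromBlocks (diagonal s) B' 0 (diagonal t) * fromBlocks P 0 0 R := by
    simp only [fromBlocks_multiply, Matrix.zero_mul, Matrix.mul_zero, add_zero, zero_add, hPA,
      hRD, B', Matrix.mul_assoc, nonsing_inv_mul _ ((isUnit_iff_isUnit_det R).1 hR),
      Matrix.mul_one]
  have h₂ := fromBlocks_sylvesterSolution_mul s t B'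
  have hres : resonantPart s t B' = 0 :=
    ((h.of_mul_eq_mul (isUnit_fromBlocks_zero₂₁.2 ⟨hP, hR⟩) h₁).of_mul_eq_mul
      (isUnit_fromBlocks_zero₂₁.2 ⟨isUnit_one, isUnit_one⟩) h₂).resonantPart_eq_zero
  have hg : fromBlocks P (Q * R) 0 R = fromBlocks 1 Q 0 1 * fromBlocks P 0 0 R := by
    simp [fromBlocks_multiply]
  rw [hg, Matrix.mul_assoc, h₁, ← Matrix.mul_assoc, h₂, hres, Matrix.mul_assoc]

end Sylvester

theorem submatrix_finSumFinEquiv_of_isUpperTriangular {m : ℕ}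
    {a : Matrix (Fin (m + 1)) (Fin (m + 1)) k} (ha : a.IsUpperTriangular) :
    a.submatrix finSumFinEquiv finSumFinEquiv =
      fromBlocks (a.submatrix Fin.castSucc Fin.castSucc) (of fun i _ => a i.castSucc (Fin.last m))
        0 (diagonal fun _ => a (Fin.last m) (Fin.last m)) := by
  ext (i | i) (j | j)
  · rfl
  · obtain rfl := Subsingleton.elim j 0
    rfl
  · exact ha (by simp [Fin.lt_def])
  · obtain rfl := Subsingleton.elim i 0
    obtain rfl := Subsingleton.elim j 0
    rfl

theorem NoJordanChains.exists_isUpperTriangular_conj_diagonal {n : ℕ}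
    {a : Matrix (Fin n) (Fin n) k} (ha : a.IsUpperTriangular) (h : NoJordanChains a) :
    ∃ p : Matrix (Fin n) (Fin n) k,
      IsUnit p ∧ p.IsUpperTriangular ∧ p * a = diagonal (fun i => a i i) * p := by
  induction n with
  | zero => exact ⟨1, isUnit_one, blockTriangular_one, Subsingleton.elim _ _⟩
  | succ m ih =>
    let e : Fin m ⊕ Fin 1 ≃ Fin (m + 1) := finSumFinEquiv
    have hA := submatrix_finSumFinEquiv_of_isUpperTriangular ha
    have hJ := hA ▸ h.submatrix_equiv e
    obtain ⟨p', hp', hp'tri, hp'a⟩ :=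
      ih (a := a.submatrix Fin.castSucc Fin.castSucc)
        (fun i j hij => ha (Fin.castSucc_lt_castSucc_iff.2 hij)) hJ.fromBlocks_topLeft
    obtain ⟨Q, hQ⟩ : ∃ Q : Matrix (Fin m) (Fin 1) k, fromBlocks p' Q 0 1 * a.submatrix e e =
        diagonal (Sum.elim (fun i => a i.castSucc i.castSucc)
          fun _ => a (Fin.last m) (Fin.last m)) * fromBlocks p' Q 0 1 := by
      rw [hA, ← fromBlocks_diagonal]
      exact ⟨_, hJ.fromBlocks_conj_diagonal (R := 1) hp' isUnit_one hp'a (by simp)⟩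
    set P : Matrix (Fin m ⊕ Fin 1) (Fin m ⊕ Fin 1) k := fromBlocks p' Q 0 1
    have hPtri : P.BlockTriangular e := by
      rintro (i | i) (j | j) hij
      · exact hp'tri (Fin.castSucc_lt_castSucc_iff.1 hij)
      · simp only [e, finSumFinEquiv_apply_left, finSumFinEquiv_apply_right, Fin.lt_def,
          Fin.val_natAdd, Fin.val_castAdd] at hij
        omega
      · rfl
      · simp [Subsingleton.elim i j] at hij
    refine ⟨P.submatrix e.symm e.symm, ?_, by simpa using hPtri.submatrix (f := e.symm), ?_⟩
    · rw [isUnit_iff_isUnit_det, det_submatrix_equiv_self, ← isUnit_iff_isUnit_det]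
      exact isUnit_fromBlocks_zero₂₁.2 ⟨hp', isUnit_one⟩
    calc P.submatrix e.symm e.symm * a = (P * a.submatrix e e).submatrix e.symm e.symm := by
          rw [← submatrix_mul_equiv P _ e.symm e.symm e.symm]
          simp
      _ = diagonal (fun i => a i i) * P.submatrix e.symm e.symm := by
          rw [hQ, ← submatrix_mul_equiv _ _ e.symm e.symm e.symm, submatrix_diagonal_equiv]
          congr
          funext i
          induction i using Fin.lastCases <;> simp [e]

theorem nonsing_inv_transpose_mul_transpose {ι : Type*} [Fintype ι] [DecidableEq ι]
    {p a c : Matrix ι ι k} (hp : IsUnit p) (h : p * a = c * p) : p⁻¹ᵀ * aᵀ = cᵀ * p⁻¹ᵀ := by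
  have hdet := (isUnit_iff_isUnit_det p).1 hp
  have hap : a * p⁻¹ = p⁻¹ * c := calc
    a * p⁻¹ = p⁻¹ * (p * a) * p⁻¹ := by rw [nonsing_inv_mul_cancel_left _ _ hdet]
    _ = p⁻¹ * c := by rw [h, Matrix.mul_assoc, mul_nonsing_inv_cancel_right _ _ hdet]
  rw [← transpose_mul, hap, transpose_mul]

end Matrix

theorem transpose_mul_Jsp_mul_fromBlocks {k : Type*} [Field k] {n : ℕ}
    {p S : Matrix (Fin n) (Fin n) k} (hp : IsUnit p) (hS : Sᵀ = -S) :
    (fromBlocks p (S * p⁻¹ᵀ) 0 p⁻¹ᵀ)ᵀ * Jsp k n * fromBlocks p (S * p⁻¹ᵀ) 0 p⁻¹ᵀ = Jsp k n := by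
  have hdet := (isUnit_iff_isUnit_det p).1 hp
  simp only [fromBlocks_transpose, transpose_zero, transpose_mul, transpose_transpose, Jsp,
    fromBlocks_multiply, mul_zero, mul_one, add_zero, zero_add, zero_mul, fromBlocks_inj,
    true_and]
  refine ⟨?_, nonsing_inv_mul p hdet, ?_⟩
  · rw [← transpose_mul, nonsing_inv_mul p hdet, transpose_one]
  · rw [hS, Matrix.mul_neg, Matrix.neg_mul, ← Matrix.mul_assoc, add_neg_cancel]

theorem stmt_10_general (k : Type) [Field k] (n : ℕ)
    (x : Matrix (Fin n ⊕ Fin n) (Fin n ⊕ Fin n) k)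
    (hxb : ∃ a b : Matrix (Fin n) (Fin n) k,
      (∀ i j : Fin n, (j : ℕ) < (i : ℕ) → a i j = 0) ∧ bᵀ = b ∧
      x = Matrix.fromBlocks a b 0 aᵀ)
    (hdiag : ∃ u : Matrix (Fin n ⊕ Fin n) (Fin n ⊕ Fin n) k, IsUnit u ∧
      ∃ d : Fin n ⊕ Fin n → k, u * x * u⁻¹ = Matrix.diagonal d) :
    ∃ g : Matrix (Fin n ⊕ Fin n) (Fin n ⊕ Fin n) k,
      (IsUnit g ∧ gᵀ * Jsp k n * g = Jsp k n ∧
        ∃ p q r : Matrix (Fin n) (Fin n) k,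
          (∀ i j : Fin n, (j : ℕ) < (i : ℕ) → p i j = 0) ∧
          g = Matrix.fromBlocks p q 0 r) ∧
      ∃ t : Fin n → k,
        g * x * g⁻¹ = Matrix.fromBlocks (Matrix.diagonal t) 0 0 (Matrix.diagonal t) := by
  obtain ⟨a, b, ha, hb, rfl⟩ := hxb
  obtain ⟨u, hu, d, hud⟩ := hdiag
  have hx : NoJordanChains (fromBlocks a b 0 aᵀ) :=
    (noJordanChains_diagonal d).of_mul_eq_mul (isUnit_nonsing_inv_iff.2 hu) (by
      rw [← hud, Matrix.mul_assoc,
        nonsing_inv_mul_cancel_left _ _ ((isUnit_iff_isUnit_det u).1 hu)])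
  obtain ⟨p, hp, hptri, hpa⟩ :=
    hx.fromBlocks_topLeft.exists_isUpperTriangular_conj_diagonal fun i j h => ha i j h
  set t := fun i => a i i
  have hpT : IsUnit p⁻¹ᵀ := (isUnit_transpose _).2 (isUnit_nonsing_inv_iff.2 hp)
  have hpTa : p⁻¹ᵀ * aᵀ = diagonal t * p⁻¹ᵀ := by
    rw [nonsing_inv_transpose_mul_transpose hp hpa, diagonal_transpose]
  have hpTinv : p⁻¹ᵀ⁻¹ = pᵀ := by
    rw [transpose_nonsing_inv, nonsing_inv_nonsing_inv _ ((isUnit_iff_isUnit_det _).1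
      ((isUnit_transpose _).2 hp))]
  set B := p * b * p⁻¹ᵀ⁻¹
  have hB : Bᵀ = B := by
    simp only [B, hpTinv, transpose_mul, transpose_transpose, hb, Matrix.mul_assoc]
  have hg : IsUnit (fromBlocks p (sylvesterSolution t t B * p⁻¹ᵀ) 0 p⁻¹ᵀ) :=
    isUnit_fromBlocks_zero₂₁.2 ⟨hp, hpT⟩
  refine ⟨_, ⟨hg, transpose_mul_Jsp_mul_fromBlocks hp (by rw [sylvesterSolution_transpose, hB]),
    _, _, _, fun i j h => hptri h, rfl⟩, t, ?_⟩
  rw [hx.fromBlocks_conj_diagonal hp hpT hpa hpTa,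
    mul_nonsing_inv_cancel_right _ _ ((isUnit_iff_isUnit_det _).1 hg)]

/-- Every diagonalizable (semisimple) element of the Borel subalgebra
`𝔟 = {[[a,b],[0,aᵀ]] : a upper triangular, bᵀ = b}` is conjugate to an element of
`𝔱 = {diag(t₁,…,tₙ,t₁,…,tₙ)}` by an element of the Borel subgroup
`B = {g ∈ Sp_{2n}(k) : g = [[p,q],[0,r]], p upper triangular}`. -/
theorem stmt_10 (k : Type) [Field k] [IsAlgClosed k] [CharP k 2] (n : ℕ) (hn : 1 ≤ n)
    (x : Matrix (Fin n ⊕ Fin n) (Fin n ⊕ Fin n) k)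
    (hxb : ∃ a b : Matrix (Fin n) (Fin n) k,
      (∀ i j : Fin n, (j : ℕ) < (i : ℕ) → a i j = 0) ∧ bᵀ = b ∧
      x = Matrix.fromBlocks a b 0 aᵀ)
    (hdiag : ∃ u : Matrix (Fin n ⊕ Fin n) (Fin n ⊕ Fin n) k, IsUnit u ∧
      ∃ d : Fin n ⊕ Fin n → k, u * x * u⁻¹ = Matrix.diagonal d) :
    ∃ g : Matrix (Fin n ⊕ Fin n) (Fin n ⊕ Fin n) k,
      (IsUnit g ∧ gᵀ * Jsp k n * g = Jsp k n ∧
        ∃ p q r : Matrix (Fin n) (Fin n) k,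
          (∀ i j : Fin n, (j : ℕ) < (i : ℕ) → p i j = 0) ∧
          g = Matrix.fromBlocks p q 0 r) ∧
      ∃ t : Fin n → k,
        g * x * g⁻¹ = Matrix.fromBlocks (Matrix.diagonal t) 0 0 (Matrix.diagonal t) :=
  stmt_10_general k n x hxb hdiag
end

section
/- Suppose x ∈ 𝔟 and there exist g ∈ Sp_{2n}(k), s ∈ 𝔱_sr and z ∈ 𝔇 with x = g·(s+z)·g⁻¹. Then there exist b ∈ B, s′ ∈ 𝔱_sr and z′ ∈ 𝔇 with x = b·(s′+z′)·b⁻¹. That is, Y ∩ 𝔟 = ⋃_{b ∈ B} b·(𝔱_sr + 𝔇)·b⁻¹, where Y = ⋃_{g ∈ Sp_{2n}(k)} g·(𝔱_sr + 𝔇)·g⁻¹. -/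
open Matrix

/-- The element `diag(t₁,…,tₙ,t₁,…,tₙ)` of `𝔱`. -/
def tDiag (k : Type*) [Field k] (n : ℕ) (t : Fin n → k) :
    Matrix (Fin n ⊕ Fin n) (Fin n ⊕ Fin n) k :=
  Matrix.fromBlocks (Matrix.diagonal t) 0 0 (Matrix.diagonal t)

/-- The element `[[0, diag d],[0,0]]` of `𝔇`. -/
def dMat (k : Type*) [Field k] (n : ℕ) (d : Fin n → k) :
    Matrix (Fin n ⊕ Fin n) (Fin n ⊕ Fin n) k :=
  Matrix.fromBlocks 0 (Matrix.diagonal d) 0 0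

section Aux

open Polynomial Finset

variable {k : Type} [Field k]

private lemma my_charpoly_transpose {n : Type*} [DecidableEq n] [Fintype n]
    (M : Matrix n n k) : Mᵀ.charpoly = M.charpoly := by
  rw [Matrix.charpoly, Matrix.charpoly, ← Matrix.det_transpose (charmatrix M)]
  congr 1
  ext i j
  by_cases h : i = j
  · subst h; simp
  · simp [Matrix.charmatrix_apply_ne _ _ _ h, Matrix.charmatrix_apply_ne _ _ _ (Ne.symm h),
      Matrix.transpose_apply]

private lemma my_charpoly_conj {n : Type*} [DecidableEq n] [Fintype n]
    (g M : Matrix n n k) (hg : IsUnit g) :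
    (g * M * g⁻¹).charpoly = M.charpoly := by
  have hdet : IsUnit g.det := (Matrix.isUnit_iff_isUnit_det g).mp hg
  have h1 : g * g⁻¹ = 1 := Matrix.mul_nonsing_inv g hdet
  set G := (C : k →+* k[X]).mapMatrix g with hG
  set Gi := (C : k →+* k[X]).mapMatrix g⁻¹ with hGi
  have hGG : G * Gi = 1 := by
    rw [hG, hGi, ← _root_.map_mul, h1, _root_.map_one]
  have key : charmatrix (g * M * g⁻¹) = G * charmatrix M * Gi := by
    rw [Matrix.charmatrix, Matrix.charmatrix, mul_sub, sub_mul]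
    congr 1
    · calc Matrix.scalar n (X : k[X]) = G * Gi * Matrix.scalar n (X : k[X]) := by
            rw [hGG, one_mul]
        _ = G * Matrix.scalar n (X : k[X]) * Gi := by
            rw [Matrix.mul_assoc, Matrix.mul_assoc]
            congr 1
            exact (Matrix.scalar_commute (X : k[X]) (fun r' => Commute.all _ _) Gi).symm
    · rw [← _root_.map_mul, ← _root_.map_mul]
  rw [Matrix.charpoly, key, Matrix.det_mul, Matrix.det_mul, Matrix.charpoly]
  have h2 : G.det * Gi.det = 1 := by rw [← Matrix.det_mul, hGG, Matrix.det_one]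
  calc G.det * (charmatrix M).det * Gi.det = (charmatrix M).det * (G.det * Gi.det) := by ring
    _ = (charmatrix M).det := by rw [h2, mul_one]

private lemma prod_roots {n : ℕ} (f : Fin n → k) :
    (∏ i, (X - C (f i))).roots = Multiset.map f Finset.univ.val := by
  rw [Finset.prod_eq_multiset_prod]
  rw [show Multiset.map (fun i => X - C (f i)) Finset.univ.val
      = Multiset.map (fun r => X - C r) (Multiset.map f Finset.univ.val) by
    rw [Multiset.map_map]; rfl]
  exact roots_multiset_prod_X_sub_C _

private lemma diag_inj {n : ℕ} (a c : Matrix (Fin n) (Fin n) k) (t d : Fin n → k)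
    (ht : Function.Injective t)
    (ha : ∀ i j : Fin n, (j : ℕ) < (i : ℕ) → a i j = 0)
    (h : (Matrix.fromBlocks a c 0 aᵀ).charpoly
       = (Matrix.fromBlocks (Matrix.diagonal t) (Matrix.diagonal d) 0
           (Matrix.diagonal t)).charpoly) :
    Function.Injective fun i => a i i := by
  have haBT : a.BlockTriangular id := by
    intro i j hij
    exact ha i j (by exact_mod_cast hij)
  rw [Matrix.charpoly_fromBlocks_zero₂₁, Matrix.charpoly_fromBlocks_zero₂₁,
    my_charpoly_transpose,
    Matrix.charpoly_of_upperTriangular a haBT,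
    Matrix.charpoly_of_upperTriangular _ (Matrix.blockTriangular_diagonal t)] at h
  simp only [Matrix.diagonal_apply_eq] at h
  have hmon : ∀ g : Fin n → k, (∏ i, (X - C (g i))) ≠ 0 := fun g =>
    (monic_prod_of_monic _ _ fun i _ => monic_X_sub_C (g i)).ne_zero
  have hroots := congrArg Polynomial.roots h
  rw [Polynomial.roots_mul (mul_ne_zero (hmon _) (hmon _)),
      Polynomial.roots_mul (mul_ne_zero (hmon _) (hmon _)), prod_roots, prod_roots] at hroots
  have key : Multiset.map (fun i => a i i) Finset.univ.val
      = Multiset.map t Finset.univ.val := by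
    classical
    rw [Multiset.ext]; intro x
    have := congrArg (Multiset.count x) hroots
    rw [Multiset.count_add, Multiset.count_add] at this
    omega
  have hnd : (Multiset.map (fun i => a i i) Finset.univ.val).Nodup := by
    rw [key]; exact Finset.univ.nodup.map ht
  intro i j hij
  exact Multiset.inj_on_of_nodup_map hnd i (Finset.mem_univ i) j (Finset.mem_univ j) hij

private def uAux {n : ℕ} (a : Matrix (Fin n) (Fin n) k) (i j : Fin n) : k :=
  if h : i < j then
    (∑ l ∈ (Finset.Ioc i j).attach, a i l.1 * uAux a l.1 j) / (a j j - a i i)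
  else if i = j then 1 else 0
termination_by (j : ℕ) - (i : ℕ)
decreasing_by
  have hl := Finset.mem_Ioc.mp l.2
  have h1 : (i : ℕ) < l.1 := hl.1
  have h2 : (l.1 : ℕ) ≤ j := hl.2
  omega

private lemma uAux_of_le {n : ℕ} (a : Matrix (Fin n) (Fin n) k) {i j : Fin n} (h : ¬ i < j) :
    uAux a i j = if i = j then 1 else 0 := by
  rw [uAux, dif_neg h]

private lemma uAux_diag {n : ℕ} (a : Matrix (Fin n) (Fin n) k) (i : Fin n) :
    uAux a i i = 1 := by
  rw [uAux_of_le a (lt_irrefl i), if_pos rfl]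

private lemma uAux_lower {n : ℕ} (a : Matrix (Fin n) (Fin n) k) {i j : Fin n} (h : j < i) :
    uAux a i j = 0 := by
  rw [uAux_of_le a (asymm h), if_neg (ne_of_gt h)]

private lemma uAux_of_lt {n : ℕ} (a : Matrix (Fin n) (Fin n) k) {i j : Fin n} (h : i < j) :
    uAux a i j = (∑ l ∈ Finset.Ioc i j, a i l * uAux a l j) / (a j j - a i i) := by
  rw [uAux, dif_pos h, Finset.sum_attach (Finset.Ioc i j) (fun l => a i l * uAux a l j)]

private lemma u_blockTriangular {n : ℕ} (a : Matrix (Fin n) (Fin n) k) :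
    (Matrix.of (uAux a)).BlockTriangular id :=
  fun _ _ h => uAux_lower a h

private lemma u_det {n : ℕ} (a : Matrix (Fin n) (Fin n) k) :
    (Matrix.of (uAux a)).det = 1 := by
  rw [Matrix.det_of_upperTriangular (u_blockTriangular a)]
  simp only [Matrix.of_apply, uAux_diag, Finset.prod_const_one]

private lemma a_mul_u {n : ℕ} (a : Matrix (Fin n) (Fin n) k)
    (ha : ∀ i j : Fin n, (j : ℕ) < (i : ℕ) → a i j = 0)
    (hf : Function.Injective fun i => a i i) :
    a * Matrix.of (uAux a) = Matrix.of (uAux a) * Matrix.diagonal (fun i => a i i) := by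
  ext i j
  rw [Matrix.mul_apply, Matrix.mul_diagonal]
  simp only [Matrix.of_apply]
  have hz : ∀ l ∈ (Finset.univ : Finset (Fin n)), l ∉ Finset.Icc i j →
      a i l * uAux a l j = 0 := by
    intro l _ hl
    rw [Finset.mem_Icc, not_and_or] at hl
    rcases hl with hl | hl
    · rw [ha i l (by exact_mod_cast lt_of_not_ge hl), zero_mul]
    · rw [uAux_lower a (lt_of_not_ge hl), mul_zero]
  rw [← Finset.sum_subset (Finset.subset_univ (Finset.Icc i j)) hz]
  rcases lt_trichotomy i j with h | h | h
  · rw [Finset.Icc_eq_cons_Ioc (le_of_lt h), Finset.sum_cons]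
    have hne : a j j - a i i ≠ 0 := by
      intro hc
      exact (ne_of_lt h) (hf (sub_eq_zero.mp hc)).symm
    have hsum : ∑ l ∈ Finset.Ioc i j, a i l * uAux a l j
        = uAux a i j * (a j j - a i i) := by
      rw [uAux_of_lt a h, div_mul_cancel₀ _ hne]
    rw [hsum]
    ring
  · subst h
    rw [Finset.Icc_self, Finset.sum_singleton, uAux_diag]
    ring
  · rw [Finset.Icc_eq_empty (not_le.mpr h), Finset.sum_empty, uAux_lower a h, zero_mul]

end Aux

/-- If `x ∈ 𝔟` is `Sp_{2n}(k)`-conjugate to an element of `𝔱_sr + 𝔇`, then it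
is `B`-conjugate to an element of `𝔱_sr + 𝔇`; that is,
`Y ∩ 𝔟 = ⋃_{b ∈ B} b·(𝔱_sr + 𝔇)·b⁻¹` where `Y = ⋃_{g ∈ Sp_{2n}(k)} g·(𝔱_sr + 𝔇)·g⁻¹`. -/
theorem stmt_15 (k : Type) [Field k] [IsAlgClosed k] [CharP k 2] (n : ℕ) (hn : 1 ≤ n)
    (x : Matrix (Fin n ⊕ Fin n) (Fin n ⊕ Fin n) k)
    (hxb : ∃ a c : Matrix (Fin n) (Fin n) k,
      (∀ i j : Fin n, (j : ℕ) < (i : ℕ) → a i j = 0) ∧ cᵀ = c ∧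
      x = Matrix.fromBlocks a c 0 aᵀ)
    (hconj : ∃ (g : Matrix (Fin n ⊕ Fin n) (Fin n ⊕ Fin n) k) (t d : Fin n → k),
      IsUnit g ∧ gᵀ * Jsp k n * g = Jsp k n ∧ Function.Injective t ∧
      x = g * (tDiag k n t + dMat k n d) * g⁻¹) :
    ∃ (b : Matrix (Fin n ⊕ Fin n) (Fin n ⊕ Fin n) k) (t' d' : Fin n → k),
      (IsUnit b ∧ bᵀ * Jsp k n * b = Jsp k n ∧
        ∃ p q r : Matrix (Fin n) (Fin n) k,
          (∀ i j : Fin n, (j : ℕ) < (i : ℕ) → p i j = 0) ∧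
          b = Matrix.fromBlocks p q 0 r) ∧
      Function.Injective t' ∧
      x = b * (tDiag k n t' + dMat k n d') * b⁻¹ := by
  classical
  obtain ⟨a, c, ha, hcsymm, hx⟩ := hxb
  obtain ⟨g, t, d, hg, -, ht, hxconj⟩ := hconj
  -- the sum tDiag + dMat as a block matrix
  have hblock : ∀ (s e : Fin n → k), tDiag k n s + dMat k n e
      = Matrix.fromBlocks (Matrix.diagonal s) (Matrix.diagonal e) 0 (Matrix.diagonal s) := by
    intro s e
    rw [tDiag, dMat, Matrix.fromBlocks_add, add_zero, zero_add, add_zero]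
  -- injectivity of the diagonal of a
  have hf : Function.Injective fun i => a i i := by
    apply diag_inj a c t d ht ha
    have h1 : x.charpoly = (tDiag k n t + dMat k n d).charpoly := by
      rw [hxconj]; exact my_charpoly_conj _ _ hg
    rw [hx, hblock t d] at h1
    exact h1
  set f : Fin n → k := fun i => a i i with hfdef
  set u : Matrix (Fin n) (Fin n) k := Matrix.of (uAux a) with hudef
  set D : Matrix (Fin n) (Fin n) k := Matrix.diagonal f with hDdef
  have hu : a * u = u * D := a_mul_u a ha hf
  have hdetu : IsUnit u.det := by rw [u_det]; exact isUnit_one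
  have hdetuT : IsUnit uᵀ.det := by rw [Matrix.det_transpose]; exact hdetu
  have huui : u * u⁻¹ = 1 := Matrix.mul_nonsing_inv u hdetu
  have huiu : u⁻¹ * u = 1 := Matrix.nonsing_inv_mul u hdetu
  have huTuTi : uᵀ * uᵀ⁻¹ = 1 := Matrix.mul_nonsing_inv uᵀ hdetuT
  have huTiuT : uᵀ⁻¹ * uᵀ = 1 := Matrix.nonsing_inv_mul uᵀ hdetuT
  have hTinv : (uᵀ⁻¹)ᵀ = u⁻¹ := by
    rw [← Matrix.transpose_nonsing_inv, Matrix.transpose_transpose]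
  have hTinv' : (u⁻¹)ᵀ = uᵀ⁻¹ := Matrix.transpose_nonsing_inv u
  set c' : Matrix (Fin n) (Fin n) k := u⁻¹ * c * uᵀ⁻¹ with hc'def
  have hc'symm : c'ᵀ = c' := by
    rw [hc'def, Matrix.transpose_mul, Matrix.transpose_mul, hTinv, hTinv', hcsymm,
      Matrix.mul_assoc]
  set m : Matrix (Fin n) (Fin n) k :=
    Matrix.of (fun i j => if i = j then 0 else c' i j / (f j - f i)) with hmdef
  have hfne : ∀ {i j : Fin n}, i ≠ j → f j - f i ≠ 0 := by
    intro i j hij hc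
    exact hij (hf (sub_eq_zero.mp hc)).symm
  have hmsymm : mᵀ = m := by
    ext i j
    rw [Matrix.transpose_apply]
    simp only [hmdef, Matrix.of_apply]
    by_cases h : i = j
    · subst h; simp
    · rw [if_neg (Ne.symm h), if_neg h]
      have h1 : c' j i = c' i j := congrFun (congrFun hc'symm i) j
      have h2 : f i - f j = f j - f i := by
        rw [CharTwo.sub_eq_add, CharTwo.sub_eq_add, add_comm]
      rw [h1, h2]
  set d' : Fin n → k := fun i => c' i i with hd'def
  set E : Matrix (Fin n) (Fin n) k := Matrix.diagonal d' with hEdef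
  have hkey : D * m + c' = E + m * D := by
    ext i j
    rw [Matrix.add_apply, Matrix.add_apply, Matrix.diagonal_mul, Matrix.mul_diagonal]
    simp only [hmdef, Matrix.of_apply, hEdef]
    by_cases h : i = j
    · subst h; simp [hd'def]
    · rw [if_neg h, Matrix.diagonal_apply_ne _ h]
      field_simp [hfne h]
      ring
  set b : Matrix (Fin n ⊕ Fin n) (Fin n ⊕ Fin n) k :=
    Matrix.fromBlocks u (u * m) 0 uᵀ⁻¹ with hbdef
  have hdetb : IsUnit b.det := by
    rw [hbdef, Matrix.det_fromBlocks_zero₂₁]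
    exact hdetu.mul (Matrix.isUnit_nonsing_inv_det uᵀ hdetuT)
  have hbunit : IsUnit b := (Matrix.isUnit_iff_isUnit_det b).mpr hdetb
  refine ⟨b, f, d', ⟨hbunit, ?_, u, u * m, uᵀ⁻¹, fun i j hij => uAux_lower a (by
    exact_mod_cast hij), rfl⟩, hf, ?_⟩
  · -- symplectic condition
    rw [hbdef, Jsp, Matrix.fromBlocks_transpose, Matrix.fromBlocks_multiply,
      Matrix.fromBlocks_multiply]
    have e11 : uᵀ * 0 + 0ᵀ * 1 = (0 : Matrix (Fin n) (Fin n) k) := by simp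
    simp only [Matrix.mul_zero, Matrix.zero_mul, Matrix.mul_one, Matrix.one_mul,
      Matrix.transpose_zero, add_zero, zero_add, Matrix.transpose_mul, hTinv]
    have h12 : uᵀ * uᵀ⁻¹ = (1 : Matrix (Fin n) (Fin n) k) := huTuTi
    have h21 : u⁻¹ * u = (1 : Matrix (Fin n) (Fin n) k) := huiu
    have h22 : u⁻¹ * (u * m) + mᵀ * uᵀ * uᵀ⁻¹ = (0 : Matrix (Fin n) (Fin n) k) := by
      rw [Matrix.mul_assoc mᵀ, huTuTi, Matrix.mul_one, ← Matrix.mul_assoc, huiu,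
        Matrix.one_mul, hmsymm]
      ext i j
      simp only [Matrix.add_apply, Matrix.zero_apply, CharTwo.add_self_eq_zero]
    rw [h12, h21, h22]
  · -- conjugation
    have hM : tDiag k n f + dMat k n d' = Matrix.fromBlocks D E 0 D := hblock f d'
    have hxb2 : x * b = b * (Matrix.fromBlocks D E 0 D) := by
      rw [hx, hbdef, Matrix.fromBlocks_multiply, Matrix.fromBlocks_multiply]
      have e11 : a * u + c * 0 = u * D + u * m * 0 := by
        rw [Matrix.mul_zero, Matrix.mul_zero, add_zero, add_zero, hu]
      have e12 : a * (u * m) + c * uᵀ⁻¹ = u * E + (u * m) * D := by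
        have h1 : a * (u * m) = u * (D * m) := by
          rw [← Matrix.mul_assoc, hu, Matrix.mul_assoc]
        have h2 : c * uᵀ⁻¹ = u * c' := by
          rw [hc'def, ← Matrix.mul_assoc, ← Matrix.mul_assoc, huui, Matrix.one_mul]
        rw [h1, h2, ← Matrix.mul_add, hkey, Matrix.mul_add, Matrix.mul_assoc]
      have e21 : (0 : Matrix (Fin n) (Fin n) k) * u + aᵀ * 0 = 0 * D + uᵀ⁻¹ * 0 := by simp
      have e22 : 0 * (u * m) + aᵀ * uᵀ⁻¹ = 0 * E + uᵀ⁻¹ * D := by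
        rw [Matrix.zero_mul, Matrix.zero_mul, zero_add, zero_add]
        have h1 : uᵀ * aᵀ = D * uᵀ := by
          have := congrArg Matrix.transpose hu
          rw [Matrix.transpose_mul, Matrix.transpose_mul, Matrix.diagonal_transpose] at this
          exact this
        have h2 : aᵀ = uᵀ⁻¹ * (D * uᵀ) := by
          rw [← h1, ← Matrix.mul_assoc, huTiuT, Matrix.one_mul]
        rw [h2, Matrix.mul_assoc, Matrix.mul_assoc, huTuTi, Matrix.mul_one]
      rw [e11, e12, e21, e22]
    have hbbi : b * b⁻¹ = 1 := Matrix.mul_nonsing_inv b hdetb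
    rw [hM, ← hxb2, Matrix.mul_assoc, hbbi, Matrix.mul_one]
end

section
/- For every b ∈ B and every s = diag(t₁,…,tₙ,t₁,…,tₙ) ∈ 𝔱, the conjugate b·s·b⁻¹ has block form [[a′, c′],[0, ᵀa′]] where a′ is upper triangular and c′ is symmetric with all diagonal entries equal to 0. That is, ⋃_{b ∈ B} b·𝔱·b⁻¹ is contained in 𝔱 ⊕ 𝔫_s, where 𝔫_s = {[[a,c],[0,ᵀa]] : a strictly upper triangular, ᵀc = c, cᵢᵢ = 0 for all i}. -/
/-!
Write `b = [[p, q], [0, r]]`. The condition `bᵀ J b = J` says `pᵀ r = 1` and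
`rᵀ q + qᵀ r = 0`, and with these `b s = [[a', c'], [0, a'ᵀ]] b` holds for
`s = [[D, 0], [0, D]]`, `D` symmetric, where `a' = p D p⁻¹` and `c' = Y + Yᵀ` with
`Y = q D pᵀ`. Thus `a'` is upper triangular together with `p` and `D`, and `c'` is
symmetric, with diagonal entries `2 Yᵢᵢ = 0` in characteristic `2`.
-/

open Matrix

namespace Matrix

variable {m R : Type*} [Fintype m] [DecidableEq m] [CommRing R]

theorem fromBlocks_transpose_mul_antidiagOne_mul_eq_iff {p q r : Matrix m m R} :
    (fromBlocks p q 0 r)ᵀ * fromBlocks 0 1 1 0 * fromBlocks p q 0 r = fromBlocks 0 1 1 0 ↔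
      pᵀ * r = 1 ∧ rᵀ * p = 1 ∧ rᵀ * q + qᵀ * r = 0 := by
  simp only [fromBlocks_transpose, fromBlocks_multiply, fromBlocks_inj, transpose_zero,
    Matrix.zero_mul, Matrix.mul_zero, Matrix.mul_one, zero_add, add_zero, true_and]

theorem fromBlocks_mul_fromBlocks_diag_eq {p q r D : Matrix m m R} (hpr : pᵀ * r = 1)
    (hrp : rᵀ * p = 1) (hqr : rᵀ * q + qᵀ * r = 0) (hD : Dᵀ = D) :
    fromBlocks p q 0 r * fromBlocks D 0 0 D =
      fromBlocks (p * D * rᵀ) (q * D * pᵀ + (q * D * pᵀ)ᵀ) 0 (p * D * rᵀ)ᵀ *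
        fromBlocks p q 0 r := by
  simp only [fromBlocks_multiply, transpose_mul, transpose_transpose, hD, Matrix.mul_zero,
    Matrix.zero_mul, add_zero, zero_add, Matrix.add_mul, Matrix.mul_assoc]
  refine fromBlocks_inj.mpr ⟨?_, ?_, rfl, ?_⟩
  · rw [hrp, Matrix.mul_one]
  · calc q * D = q * (D * (pᵀ * r)) + p * (D * (rᵀ * q + qᵀ * r)) := by
          rw [hpr, hqr, Matrix.mul_one, Matrix.mul_zero, Matrix.mul_zero, add_zero]
      _ = p * (D * (rᵀ * q)) + (q * (D * (pᵀ * r)) + p * (D * (qᵀ * r))) := by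
          rw [Matrix.mul_add, Matrix.mul_add]
          abel
  · rw [hpr, Matrix.mul_one]

theorem BlockTriangular.mul_mul_of_mul_eq_one {α : Type*} [LinearOrder α] {f : m → α}
    {p r D : Matrix m m R} (hp : BlockTriangular p f) (hD : BlockTriangular D f)
    (hrp : rᵀ * p = 1) : BlockTriangular (p * D * rᵀ) f := by
  have : Invertible p := invertibleOfLeftInverse p rᵀ hrp
  rw [← inv_eq_left_inv hrp]
  exact (hp.mul hD).mul (blockTriangular_inv_of_blockTriangular hp)

end Matrix

theorem Matrix.add_transpose_apply_self {m R : Type*} [Ring R] [CharP R 2] (A : Matrix m m R)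
    (i : m) : (A + Aᵀ) i i = 0 := by
  rw [add_apply, transpose_apply, CharTwo.add_self_eq_zero]

theorem stmt_16_general (k : Type) [Field k] [CharP k 2] (n : ℕ)
    (b : Matrix (Fin n ⊕ Fin n) (Fin n ⊕ Fin n) k)
    (hbu : IsUnit b) (hbsp : bᵀ * Jsp k n * b = Jsp k n)
    (hbB : ∃ p q r : Matrix (Fin n) (Fin n) k,
      (∀ i j : Fin n, (j : ℕ) < (i : ℕ) → p i j = 0) ∧ b = Matrix.fromBlocks p q 0 r)
    (t : Fin n → k) :
    ∃ a' c' : Matrix (Fin n) (Fin n) k,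
      (∀ i j : Fin n, (j : ℕ) < (i : ℕ) → a' i j = 0) ∧
      c'ᵀ = c' ∧ (∀ i : Fin n, c' i i = 0) ∧
      b * tDiag k n t * b⁻¹ = Matrix.fromBlocks a' c' 0 a'ᵀ := by
  obtain ⟨p, q, r, hp, rfl⟩ := hbB
  obtain ⟨hpr, hrp, hqr⟩ := fromBlocks_transpose_mul_antidiagOne_mul_eq_iff.mp hbsp
  have hconj := fromBlocks_mul_fromBlocks_diag_eq hpr hrp hqr (diagonal_transpose t)
  set Y := q * diagonal t * pᵀ
  refine ⟨p * diagonal t * rᵀ, Y + Yᵀ,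
    BlockTriangular.mul_mul_of_mul_eq_one (f := Fin.val) hp (blockTriangular_diagonal t) hrp,
    by rw [transpose_add, transpose_transpose, add_comm], add_transpose_apply_self Y, ?_⟩
  rw [tDiag, hconj]
  exact mul_nonsing_inv_cancel_right _ _ ((isUnit_iff_isUnit_det _).mp hbu)

/-- For every `b` in the Borel subgroup `B` of `Sp_{2n}(k)` and every
`s = diag(t₁,…,tₙ,t₁,…,tₙ) ∈ 𝔱`, the conjugate `b·s·b⁻¹` has block form `[[a′,c′],[0,a′ᵀ]]`
with `a′` upper triangular and `c′` symmetric with zero diagonal; i.e.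
`⋃_{b ∈ B} b·𝔱·b⁻¹ ⊆ 𝔱 ⊕ 𝔫_s`. -/
theorem stmt_16 (k : Type) [Field k] [IsAlgClosed k] [CharP k 2] (n : ℕ) (hn : 1 ≤ n)
    (b : Matrix (Fin n ⊕ Fin n) (Fin n ⊕ Fin n) k)
    (hbu : IsUnit b) (hbsp : bᵀ * Jsp k n * b = Jsp k n)
    (hbB : ∃ p q r : Matrix (Fin n) (Fin n) k,
      (∀ i j : Fin n, (j : ℕ) < (i : ℕ) → p i j = 0) ∧ b = Matrix.fromBlocks p q 0 r)
    (t : Fin n → k) :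
    ∃ a' c' : Matrix (Fin n) (Fin n) k,
      (∀ i j : Fin n, (j : ℕ) < (i : ℕ) → a' i j = 0) ∧
      c'ᵀ = c' ∧ (∀ i : Fin n, c' i i = 0) ∧
      b * tDiag k n t * b⁻¹ = Matrix.fromBlocks a' c' 0 a'ᵀ :=
  stmt_16_general k n b hbu hbsp hbB t
end
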